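/- arXiv:2604.22873 — 9 statements merged into one kernel-verified Lean document; each statement's English description precedes it below -/
import Mathlib

section
/- Let A be a nonempty finite set, let u and v be probability mass functions on A, suppose there exists a ∈ A with u(a) > 0 and v(a) > 0, and for α ∈ (0,1) define π_α(a) = u(a)^α · v(a)^{1−α} / Σ_{a'∈A} u(a')^α · v(a')^{1−α}. Let Γ' = {a ∈ A : u(a) > 0}. Then for every a ∈ A, π_α(a) tends to v(a)·𝟙[u(a) > 0] / Σ_{a'∈Γ'} v(a') as α tends to 0 from above; that is, the Product-of-Experts policy converges to the deployment prior restricted and renormalized to the support of the frozen actor. -/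
lemma term_tendsto {u v : ℝ} (hu : 0 ≤ u) (hv : 0 ≤ v) :
    Filter.Tendsto (fun α : ℝ => u ^ α * v ^ (1 - α))
      (nhdsWithin 0 (Set.Ioo (0 : ℝ) 1))
      (nhds (v * (if 0 < u then 1 else 0))) := by
  rcases eq_or_lt_of_le hu with hu0 | hu0
  · simp only [← hu0, lt_irrefl, if_false, mul_zero]
    apply Filter.Tendsto.congr' _ tendsto_const_nhds
    filter_upwards [self_mem_nhdsWithin] with α hα
    rw [Real.zero_rpow (ne_of_gt hα.1), zero_mul]
  · rcases eq_or_lt_of_le hv with hv0 | hv0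
    · simp only [← hv0, zero_mul]
      apply Filter.Tendsto.congr' _ tendsto_const_nhds
      filter_upwards [self_mem_nhdsWithin] with α hα
      rw [Real.zero_rpow (by linarith [hα.2] : (1 : ℝ) - α ≠ 0), mul_zero]
    · have h1 : Filter.Tendsto (fun α : ℝ => u ^ α) (nhdsWithin 0 (Set.Ioo (0:ℝ) 1))
          (nhds 1) := by
        have := (Real.continuousAt_const_rpow (ne_of_gt hu0) (b := 0)).tendsto
        rw [Real.rpow_zero] at this
        exact this.mono_left nhdsWithin_le_nhds
      have h2 : Filter.Tendsto (fun α : ℝ => v ^ (1 - α)) (nhdsWithin 0 (Set.Ioo (0:ℝ) 1))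
          (nhds v) := by
        have hc : ContinuousAt (fun α : ℝ => v ^ (1 - α)) 0 := by
          exact (Real.continuousAt_const_rpow (ne_of_gt hv0)).comp
            (by fun_prop)
        have := hc.tendsto
        simp only [sub_zero, Real.rpow_one] at this
        exact this.mono_left nhdsWithin_le_nhds
      have := h1.mul h2
      rw [one_mul] at this
      simpa [hu0, mul_comm] using this

/-- **Interpolation, prior limit.** The Product-of-Experts policy
`π_α(a) = u(a)^α v(a)^{1−α} / Σ_{a'} u(a')^α v(a')^{1−α}` tends, as `α → 0⁺`
within `(0,1)`, to the deployment prior `v` restricted and renormalized to the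
support `Γ' = {a | u a > 0}` of the frozen actor. -/
theorem stmt_3 {A : Type*} [Fintype A] [Nonempty A]
    (u v : A → ℝ)
    (hu0 : ∀ a, 0 ≤ u a) (hu1 : ∑ a, u a = 1)
    (hv0 : ∀ a, 0 ≤ v a) (hv1 : ∑ a, v a = 1)
    (hex : ∃ a, 0 < u a ∧ 0 < v a) (a : A) :
    Filter.Tendsto
      (fun α : ℝ =>
        u a ^ α * v a ^ (1 - α) / ∑ a', u a' ^ α * v a' ^ (1 - α))
      (nhdsWithin 0 (Set.Ioo (0 : ℝ) 1))
      (nhds (v a * (if 0 < u a then 1 else 0) /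
        ∑ a' ∈ Finset.univ.filter (fun a' => 0 < u a'), v a')) := by
  obtain ⟨a₀, ha₀u, ha₀v⟩ := hex
  have hden : (0 : ℝ) < ∑ a' ∈ Finset.univ.filter (fun a' => 0 < u a'), v a' := by
    apply Finset.sum_pos' (fun i _ => hv0 i)
    exact ⟨a₀, by simp [ha₀u], ha₀v⟩
  have hsum : Filter.Tendsto (fun α : ℝ => ∑ a', u a' ^ α * v a' ^ (1 - α))
      (nhdsWithin 0 (Set.Ioo (0 : ℝ) 1))
      (nhds (∑ a' ∈ Finset.univ.filter (fun a' => 0 < u a'), v a')) := by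
    rw [Finset.sum_filter]
    have : ∀ a' : A, (if 0 < u a' then v a' else 0) = v a' * (if 0 < u a' then 1 else 0) := by
      intro a'; split <;> simp
    simp_rw [this]
    exact tendsto_finset_sum _ (fun i _ => term_tendsto (hu0 i) (hv0 i))
  exact (term_tendsto (hu0 a) (hv0 a)).div hsum (ne_of_gt hden)
end

section
/- In a finite discounted Markov decision process with state space S, action space A, transition kernel P, reward r, discount γ ∈ (0,1), and initial distribution μ, let π and π' be any two policies. Then the performance difference lemma holds: J(π') − J(π) = (1/(1−γ)) · Σ_{s∈S} d^{π'}(s) · Σ_{a∈A} π'(a|s) · A^π(s,a). -/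
/-- **Performance difference lemma** in a finite discounted MDP. Value
functions are characterized by their Bellman equations (which have a unique
solution since `γ < 1`), and the discounted occupancy of `π'` by its fixed
point equation. -/
theorem stmt_8 {S A : Type*} [Fintype S] [Fintype A] [Nonempty S] [Nonempty A]
    (γ : ℝ) (hγ : γ ∈ Set.Ioo (0 : ℝ) 1)
    (μ : S → ℝ) (hμ0 : ∀ s, 0 ≤ μ s) (hμ1 : ∑ s, μ s = 1)
    (P : S → A → S → ℝ) (hP0 : ∀ s a s', 0 ≤ P s a s')
    (hP1 : ∀ s a, ∑ s', P s a s' = 1)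
    (r : S → A → ℝ)
    (π π' : S → A → ℝ)
    (hπ0 : ∀ s a, 0 ≤ π s a) (hπ1 : ∀ s, ∑ a, π s a = 1)
    (hπ'0 : ∀ s a, 0 ≤ π' s a) (hπ'1 : ∀ s, ∑ a, π' s a = 1)
    (V V' : S → ℝ)
    (hV : ∀ s, V s = ∑ a, π s a * (r s a + γ * ∑ s', P s a s' * V s'))
    (hV' : ∀ s, V' s = ∑ a, π' s a * (r s a + γ * ∑ s', P s a s' * V' s'))
    (d' : S → ℝ)
    (hd' : ∀ s, d' s = (1 - γ) * μ s + γ * ∑ t, ∑ a, d' t * π' t a * P t a s) :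
    (∑ s, μ s * V' s) - (∑ s, μ s * V s) =
      (1 / (1 - γ)) *
        ∑ s, d' s * ∑ a, π' s a *
          (r s a + γ * (∑ s', P s a s' * V s') - V s) := by
  have hγ1 : (1:ℝ) - γ ≠ 0 := by have := hγ.2; intro h; linarith
  set W : S → ℝ := fun s => V' s - V s with hW
  have key : ∀ s, ∑ a, π' s a * (r s a + γ * (∑ s', P s a s' * V s') - V s)
      = W s - γ * ∑ a, π' s a * ∑ s', P s a s' * W s' := by
    intro s
    have e1 : ∑ a, π' s a * (r s a + γ * (∑ s', P s a s' * V s') - V s)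
        = (∑ a, π' s a * (r s a + γ * ∑ s', P s a s' * V' s'))
          - γ * (∑ a, π' s a * ∑ s', P s a s' * W s')
          - (∑ a, π' s a) * V s := by
      rw [Finset.sum_mul, Finset.mul_sum, ← Finset.sum_sub_distrib,
        ← Finset.sum_sub_distrib]
      apply Finset.sum_congr rfl
      intro a _
      have h2 : ∑ s', P s a s' * W s'
          = (∑ s', P s a s' * V' s') - ∑ s', P s a s' * V s' := by
        rw [← Finset.sum_sub_distrib]
        apply Finset.sum_congr rfl
        intro s' _; simp [hW]; ring
      rw [h2]; ring
    rw [e1, ← hV' s, hπ'1 s, hW]; ring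
  have hocc : ∀ s', γ * (∑ t, ∑ a, d' t * π' t a * P t a s')
      = d' s' - (1 - γ) * μ s' := by
    intro s'; have := hd' s'; linarith
  have swap : ∑ s, d' s * (γ * ∑ a, π' s a * ∑ s', P s a s' * W s')
      = ∑ s', (d' s' - (1 - γ) * μ s') * W s' := by
    have : ∑ s, d' s * (γ * ∑ a, π' s a * ∑ s', P s a s' * W s')
        = ∑ s', (γ * (∑ t, ∑ a, d' t * π' t a * P t a s')) * W s' := by
      simp_rw [Finset.mul_sum, Finset.sum_mul]
      have h1 : ∀ s : S, ∑ a : A, ∑ s' : S, d' s * (γ * (π' s a * (P s a s' * W s')))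
          = ∑ s' : S, ∑ a : A, d' s * (γ * (π' s a * (P s a s' * W s'))) :=
        fun s => Finset.sum_comm
      simp_rw [h1]
      rw [Finset.sum_comm]
      apply Finset.sum_congr rfl
      intro s' _
      apply Finset.sum_congr rfl
      intro s _
      apply Finset.sum_congr rfl
      intro a _
      ring
    rw [this]
    apply Finset.sum_congr rfl
    intro s' _
    rw [hocc s']
  have main : ∑ s, d' s * ∑ a, π' s a *
      (r s a + γ * (∑ s', P s a s' * V s') - V s)
      = (1 - γ) * ∑ s, μ s * W s := by
    calc ∑ s, d' s * ∑ a, π' s a * (r s a + γ * (∑ s', P s a s' * V s') - V s)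
        = ∑ s, (d' s * W s - d' s * (γ * ∑ a, π' s a * ∑ s', P s a s' * W s')) := by
          apply Finset.sum_congr rfl
          intro s _
          rw [key s]; ring
      _ = (∑ s, d' s * W s) - ∑ s, d' s * (γ * ∑ a, π' s a * ∑ s', P s a s' * W s') := by
          rw [Finset.sum_sub_distrib]
      _ = (∑ s, d' s * W s) - ∑ s, (d' s - (1 - γ) * μ s) * W s := by rw [swap]
      _ = (1 - γ) * ∑ s, μ s * W s := by
          rw [Finset.mul_sum, ← Finset.sum_sub_distrib]
          apply Finset.sum_congr rfl
          intro s _; ring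
  rw [main]
  have hlhs : (∑ s, μ s * V' s) - (∑ s, μ s * V s) = ∑ s, μ s * W s := by
    rw [← Finset.sum_sub_distrib]
    apply Finset.sum_congr rfl
    intro s _; simp [hW]; ring
  rw [hlhs]
  field_simp
end

section
/- In a finite discounted Markov decision process with state space S, action space A, transition kernel P, discount γ ∈ (0,1), and initial distribution μ, let π and π' be any two policies and let δ = max_{s∈S} TV(π'(·|s), π(·|s)). Then the discounted occupancies satisfy ‖d^{π'} − d^π‖₁ ≤ (2γ/(1−γ)) · δ. -/
/-- Total variation distance between pmfs on a finite set. -/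
noncomputable def tvDist {X : Type*} [Fintype X] (p q : X → ℝ) : ℝ :=
  (1 / 2) * ∑ x, |p x - q x|

/-- **Occupancy difference bound.** If `δ = max_s TV(π'(·|s), π(·|s))`, then
the discounted occupancies satisfy `‖d^{π'} − d^π‖₁ ≤ (2γ/(1−γ))·δ`. -/
theorem stmt_9 {S A : Type*} [Fintype S] [Fintype A] [Nonempty S] [Nonempty A]
    (γ : ℝ) (hγ : γ ∈ Set.Ioo (0 : ℝ) 1)
    (μ : S → ℝ) (hμ0 : ∀ s, 0 ≤ μ s) (hμ1 : ∑ s, μ s = 1)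
    (P : S → A → S → ℝ) (hP0 : ∀ s a s', 0 ≤ P s a s')
    (hP1 : ∀ s a, ∑ s', P s a s' = 1)
    (π π' : S → A → ℝ)
    (hπ0 : ∀ s a, 0 ≤ π s a) (hπ1 : ∀ s, ∑ a, π s a = 1)
    (hπ'0 : ∀ s a, 0 ≤ π' s a) (hπ'1 : ∀ s, ∑ a, π' s a = 1)
    (d d' : S → ℝ)
    (hd : ∀ s, d s = (1 - γ) * μ s + γ * ∑ t, ∑ a, d t * π t a * P t a s)
    (hd' : ∀ s, d' s = (1 - γ) * μ s + γ * ∑ t, ∑ a, d' t * π' t a * P t a s)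
    (δ : ℝ)
    (hδ : δ = Finset.univ.sup' Finset.univ_nonempty
      (fun s => tvDist (π' s) (π s))) :
    ∑ s, |d' s - d s| ≤ (2 * γ / (1 - γ)) * δ := by
  obtain ⟨hγ0, hγ1⟩ := hγ
  have h1γ : (0:ℝ) < 1 - γ := by linarith
  -- δ bounds each tvDist, and δ ≥ 0
  have hδt : ∀ t : S, tvDist (π' t) (π t) ≤ δ := by
    intro t
    rw [hδ]
    exact Finset.le_sup' (fun s => tvDist (π' s) (π s)) (Finset.mem_univ t)
  have htv0 : ∀ t : S, 0 ≤ tvDist (π' t) (π t) := by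
    intro t
    unfold tvDist
    positivity
  have hδ0 : 0 ≤ δ := le_trans (htv0 (Classical.arbitrary S)) (hδt _)
  -- Σ |d'| ≤ 1
  have hsum' : ∑ t, |d' t| ≤ 1 := by
    have hstep : ∀ s, |d' s| ≤ (1 - γ) * μ s + γ * ∑ t, ∑ a, |d' t| * π' t a * P t a s := by
      intro s
      rw [hd' s]
      refine le_trans (abs_add_le _ _) ?_
      gcongr
      · rw [abs_of_nonneg (mul_nonneg h1γ.le (hμ0 s))]
      · rw [abs_mul, abs_of_nonneg hγ0.le]
        gcongr
        refine le_trans (Finset.abs_sum_le_sum_abs _ _) ?_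
        refine Finset.sum_le_sum fun t _ => ?_
        refine le_trans (Finset.abs_sum_le_sum_abs _ _) ?_
        refine Finset.sum_le_sum fun a _ => ?_
        rw [abs_mul, abs_mul, abs_of_nonneg (hπ'0 t a), abs_of_nonneg (hP0 t a s)]
    have h2 : ∑ s, |d' s| ≤ (1 - γ) + γ * ∑ t, |d' t| := by
      calc ∑ s, |d' s| ≤ ∑ s, ((1 - γ) * μ s + γ * ∑ t, ∑ a, |d' t| * π' t a * P t a s) :=
            Finset.sum_le_sum fun s _ => hstep s
        _ = (1 - γ) + γ * ∑ t, |d' t| := by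
            rw [Finset.sum_add_distrib, ← Finset.mul_sum, hμ1, mul_one, ← Finset.mul_sum]
            congr 2
            rw [Finset.sum_comm]
            refine Finset.sum_congr rfl fun t _ => ?_
            rw [Finset.sum_comm]
            calc ∑ a, ∑ s, |d' t| * π' t a * P t a s = ∑ a, |d' t| * π' t a := by
                  refine Finset.sum_congr rfl fun a _ => ?_
                  rw [← Finset.mul_sum, hP1, mul_one]
              _ = |d' t| := by rw [← Finset.mul_sum, hπ'1, mul_one]
    nlinarith [h2]
  -- main contraction bound
  set X := ∑ s, |d' s - d s| with hX
  have hkey : X ≤ γ * (2 * δ * ∑ t, |d' t| + X) := by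
    have hsub : ∀ s, d' s - d s = γ * ∑ t, ∑ a, (d' t * π' t a - d t * π t a) * P t a s := by
      intro s
      have he : ∑ t, ∑ a, (d' t * π' t a - d t * π t a) * P t a s
          = (∑ t, ∑ a, d' t * π' t a * P t a s) - ∑ t, ∑ a, d t * π t a * P t a s := by
        simp [sub_mul, Finset.sum_sub_distrib]
      rw [hd s, hd' s, he]; ring
    have hstep : ∀ s, |d' s - d s| ≤ γ * ∑ t, ∑ a, |d' t * π' t a - d t * π t a| * P t a s := by
      intro s
      rw [hsub s, abs_mul, abs_of_nonneg hγ0.le]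
      gcongr
      refine le_trans (Finset.abs_sum_le_sum_abs _ _) ?_
      refine Finset.sum_le_sum fun t _ => ?_
      refine le_trans (Finset.abs_sum_le_sum_abs _ _) ?_
      refine Finset.sum_le_sum fun a _ => ?_
      rw [abs_mul, abs_of_nonneg (hP0 t a s)]
    have hswap : ∑ s, (γ * ∑ t, ∑ a, |d' t * π' t a - d t * π t a| * P t a s)
        = γ * ∑ t, ∑ a, |d' t * π' t a - d t * π t a| := by
      rw [← Finset.mul_sum]
      congr 1
      rw [Finset.sum_comm]
      refine Finset.sum_congr rfl fun t _ => ?_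
      rw [Finset.sum_comm]
      refine Finset.sum_congr rfl fun a _ => ?_
      rw [← Finset.mul_sum, hP1, mul_one]
    have hper : ∀ t, ∑ a, |d' t * π' t a - d t * π t a|
        ≤ 2 * δ * |d' t| + |d' t - d t| := by
      intro t
      have h1 : ∀ a, |d' t * π' t a - d t * π t a|
          ≤ |d' t| * |π' t a - π t a| + |d' t - d t| * π t a := by
        intro a
        have : d' t * π' t a - d t * π t a
            = d' t * (π' t a - π t a) + (d' t - d t) * π t a := by ring
        rw [this]
        refine le_trans (abs_add_le _ _) ?_
        rw [abs_mul, abs_mul, abs_of_nonneg (hπ0 t a)]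
      calc ∑ a, |d' t * π' t a - d t * π t a|
          ≤ ∑ a, (|d' t| * |π' t a - π t a| + |d' t - d t| * π t a) :=
            Finset.sum_le_sum fun a _ => h1 a
        _ = |d' t| * ∑ a, |π' t a - π t a| + |d' t - d t| := by
            rw [Finset.sum_add_distrib, ← Finset.mul_sum, ← Finset.mul_sum, hπ1, mul_one]
        _ = |d' t| * (2 * tvDist (π' t) (π t)) + |d' t - d t| := by
            unfold tvDist; ring_nf
        _ ≤ |d' t| * (2 * δ) + |d' t - d t| :=
            add_le_add_left
              (mul_le_mul_of_nonneg_left (by linarith [hδt t]) (abs_nonneg _)) _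
        _ = 2 * δ * |d' t| + |d' t - d t| := by ring
    calc X ≤ ∑ s, (γ * ∑ t, ∑ a, |d' t * π' t a - d t * π t a| * P t a s) :=
          Finset.sum_le_sum fun s _ => hstep s
      _ = γ * ∑ t, ∑ a, |d' t * π' t a - d t * π t a| := hswap
      _ ≤ γ * ∑ t, (2 * δ * |d' t| + |d' t - d t|) :=
          mul_le_mul_of_nonneg_left (Finset.sum_le_sum fun t _ => hper t) hγ0.le
      _ = γ * (2 * δ * ∑ t, |d' t| + X) := by
          rw [Finset.sum_add_distrib, ← Finset.mul_sum]
  have hfin : γ * (2 * δ * ∑ t, |d' t| + X) ≤ γ * (2 * δ + X) := by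
    have : 2 * δ * ∑ t, |d' t| ≤ 2 * δ := by
      nlinarith [hsum', hδ0]
    nlinarith [hγ0]
  have : X ≤ γ * (2 * δ + X) := le_trans hkey hfin
  rw [div_mul_eq_mul_div, le_div_iff₀ h1γ]
  nlinarith [this]
end

section
/- Let S and A be nonempty finite sets, γ ∈ (0,1), μ an initial distribution on S, and let P_train and P_deploy be two transition kernels on S×A satisfying max_{s∈S, a∈A} TV(P_train(·|s,a), P_deploy(·|s,a)) ≤ ε_P. Then for every policy π, the discounted occupancies computed with the two kernels satisfy ‖d_deploy^π − d_train^π‖₁ ≤ (2γ/(1−γ)) · ε_P. -/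
/-- Auxiliary: summing `g t a * P t a s` over `s` first collapses the kernel. -/
lemma sum3_collapse {S A : Type*} [Fintype S] [Fintype A]
    (g : S → A → ℝ) (P : S → A → S → ℝ) (hP1 : ∀ t a, ∑ s, P t a s = 1) :
    ∑ s, ∑ t, ∑ a, g t a * P t a s = ∑ t, ∑ a, g t a := by
  rw [Finset.sum_comm]
  apply Finset.sum_congr rfl
  intro t _
  rw [Finset.sum_comm]
  apply Finset.sum_congr rfl
  intro a _
  rw [← Finset.mul_sum, hP1, mul_one]

/-- **State-occupancy shift under kernel perturbation.** If the train and
deploy transition kernels satisfy `max_{s,a} TV(P_train(·|s,a), P_deploy(·|s,a)) ≤ ε_P`,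
then for every policy `π` the discounted occupancies computed with the two
kernels satisfy `‖d_deploy^π − d_train^π‖₁ ≤ (2γ/(1−γ))·ε_P`. -/
theorem stmt_10 {S A : Type*} [Fintype S] [Fintype A] [Nonempty S] [Nonempty A]
    (γ : ℝ) (hγ : γ ∈ Set.Ioo (0 : ℝ) 1)
    (μ : S → ℝ) (hμ0 : ∀ s, 0 ≤ μ s) (hμ1 : ∑ s, μ s = 1)
    (Ptr Pdep : S → A → S → ℝ)
    (hPtr0 : ∀ s a s', 0 ≤ Ptr s a s') (hPtr1 : ∀ s a, ∑ s', Ptr s a s' = 1)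
    (hPdep0 : ∀ s a s', 0 ≤ Pdep s a s') (hPdep1 : ∀ s a, ∑ s', Pdep s a s' = 1)
    (εP : ℝ) (hεP : ∀ s a, tvDist (Ptr s a) (Pdep s a) ≤ εP)
    (π : S → A → ℝ)
    (hπ0 : ∀ s a, 0 ≤ π s a) (hπ1 : ∀ s, ∑ a, π s a = 1)
    (dtr ddep : S → ℝ)
    (hdtr : ∀ s, dtr s = (1 - γ) * μ s + γ * ∑ t, ∑ a, dtr t * π t a * Ptr t a s)
    (hddep : ∀ s, ddep s = (1 - γ) * μ s + γ * ∑ t, ∑ a, ddep t * π t a * Pdep t a s) :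
    ∑ s, |ddep s - dtr s| ≤ (2 * γ / (1 - γ)) * εP := by
  obtain ⟨hγ0, hγ1⟩ := hγ
  have h1γ : 0 < 1 - γ := by linarith
  -- Step 1: `dtr` is nonnegative.
  have hdtr0 : ∀ s, 0 ≤ dtr s := by
    set f : S → ℝ := fun s => max (-(dtr s)) 0 with hf
    have hfnn : ∀ s, 0 ≤ f s := fun s => le_max_right _ _
    have hfge : ∀ s, -(f s) ≤ dtr s := fun s => neg_le.mp (le_max_left _ _)
    have key : ∀ s, f s ≤ γ * ∑ t, ∑ a, f t * π t a * Ptr t a s := by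
      intro s
      have hrhs0 : 0 ≤ γ * ∑ t, ∑ a, f t * π t a * Ptr t a s := by
        apply mul_nonneg hγ0.le
        apply Finset.sum_nonneg; intro t _
        apply Finset.sum_nonneg; intro a _
        exact mul_nonneg (mul_nonneg (hfnn t) (hπ0 t a)) (hPtr0 t a s)
      have hlow : -(γ * ∑ t, ∑ a, f t * π t a * Ptr t a s) ≤ dtr s := by
        rw [hdtr s]
        have hsum : ∑ t, ∑ a, (-(f t)) * π t a * Ptr t a s
            ≤ ∑ t, ∑ a, dtr t * π t a * Ptr t a s := by
          apply Finset.sum_le_sum; intro t _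
          apply Finset.sum_le_sum; intro a _
          exact mul_le_mul_of_nonneg_right
            (mul_le_mul_of_nonneg_right (hfge t) (hπ0 t a)) (hPtr0 t a s)
        have hneg : ∑ t, ∑ a, (-(f t)) * π t a * Ptr t a s
            = -(∑ t, ∑ a, f t * π t a * Ptr t a s) := by
          simp [Finset.sum_neg_distrib, neg_mul]
        have hμs : 0 ≤ (1 - γ) * μ s := mul_nonneg h1γ.le (hμ0 s)
        rw [hneg] at hsum
        nlinarith [mul_le_mul_of_nonneg_left hsum hγ0.le]
      have : -(dtr s) ≤ γ * ∑ t, ∑ a, f t * π t a * Ptr t a s := by linarith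
      exact max_le this hrhs0
    have hsum : ∑ s, f s ≤ γ * ∑ s, f s := by
      calc ∑ s, f s ≤ ∑ s, γ * ∑ t, ∑ a, f t * π t a * Ptr t a s :=
            Finset.sum_le_sum (fun s _ => key s)
        _ = γ * ∑ s, ∑ t, ∑ a, (f t * π t a) * Ptr t a s := by
            rw [← Finset.mul_sum]
        _ = γ * ∑ t, ∑ a, f t * π t a := by
            rw [sum3_collapse (fun t a => f t * π t a) Ptr hPtr1]
        _ = γ * ∑ t, f t * ∑ a, π t a := by
            congr 1; apply Finset.sum_congr rfl; intro t _; rw [Finset.mul_sum]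
        _ = γ * ∑ s, f s := by
            congr 1; apply Finset.sum_congr rfl; intro t _; rw [hπ1, mul_one]
    have hfz : ∑ s, f s = 0 := by
      have h0 : 0 ≤ ∑ s, f s := Finset.sum_nonneg (fun s _ => hfnn s)
      nlinarith
    intro s
    have := (Finset.sum_eq_zero_iff_of_nonneg (fun s _ => hfnn s)).mp hfz s
      (Finset.mem_univ s)
    have hfs0 : f s = 0 := this
    have := hfge s
    rw [hfs0] at this
    linarith
  -- Step 2: `dtr` sums to 1.
  have hdtr1 : ∑ s, dtr s = 1 := by
    have h : ∑ s, dtr s = (1 - γ) * 1 + γ * ∑ t, dtr t := by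
      calc ∑ s, dtr s
          = ∑ s, ((1 - γ) * μ s + γ * ∑ t, ∑ a, dtr t * π t a * Ptr t a s) :=
            Finset.sum_congr rfl (fun s _ => hdtr s)
        _ = (1 - γ) * ∑ s, μ s + γ * ∑ s, ∑ t, ∑ a, (dtr t * π t a) * Ptr t a s := by
            rw [Finset.sum_add_distrib, ← Finset.mul_sum, ← Finset.mul_sum]
        _ = (1 - γ) * 1 + γ * ∑ t, ∑ a, dtr t * π t a := by
            rw [hμ1, sum3_collapse (fun t a => dtr t * π t a) Ptr hPtr1]
        _ = (1 - γ) * 1 + γ * ∑ t, dtr t := by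
            congr 1; congr 1; apply Finset.sum_congr rfl; intro t _
            rw [← Finset.mul_sum, hπ1, mul_one]
    have h2 : (1 - γ) * (∑ s, dtr s - 1) = 0 := by linear_combination h
    rcases mul_eq_zero.mp h2 with h3 | h3
    · linarith
    · linarith
  -- Step 3: main bound.
  set Δ : S → ℝ := fun s => ddep s - dtr s with hΔdef
  have hΔeq : ∀ s, Δ s = γ * ((∑ t, ∑ a, Δ t * π t a * Pdep t a s)
      + ∑ t, ∑ a, dtr t * π t a * (Pdep t a s - Ptr t a s)) := by
    intro s
    have h1 : (∑ t, ∑ a, ddep t * π t a * Pdep t a s)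
        - (∑ t, ∑ a, dtr t * π t a * Ptr t a s)
        = (∑ t, ∑ a, Δ t * π t a * Pdep t a s)
          + ∑ t, ∑ a, dtr t * π t a * (Pdep t a s - Ptr t a s) := by
      rw [← Finset.sum_sub_distrib, ← Finset.sum_add_distrib]
      apply Finset.sum_congr rfl; intro t _
      rw [← Finset.sum_sub_distrib, ← Finset.sum_add_distrib]
      apply Finset.sum_congr rfl; intro a _
      simp only [hΔdef]; ring
    simp only [hΔdef]
    rw [hddep s, hdtr s]
    rw [← h1]
    ring
  have habs : ∀ s, |Δ s| ≤ γ * ((∑ t, ∑ a, |Δ t| * π t a * Pdep t a s)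
      + ∑ t, ∑ a, dtr t * π t a * |Pdep t a s - Ptr t a s|) := by
    intro s
    rw [hΔeq s, abs_mul, abs_of_nonneg hγ0.le]
    apply mul_le_mul_of_nonneg_left _ hγ0.le
    calc |(∑ t, ∑ a, Δ t * π t a * Pdep t a s)
          + ∑ t, ∑ a, dtr t * π t a * (Pdep t a s - Ptr t a s)|
        ≤ |∑ t, ∑ a, Δ t * π t a * Pdep t a s|
          + |∑ t, ∑ a, dtr t * π t a * (Pdep t a s - Ptr t a s)| := abs_add_le _ _
      _ ≤ (∑ t, ∑ a, |Δ t| * π t a * Pdep t a s)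
          + ∑ t, ∑ a, dtr t * π t a * |Pdep t a s - Ptr t a s| := by
          apply add_le_add
          · calc |∑ t, ∑ a, Δ t * π t a * Pdep t a s|
                ≤ ∑ t, |∑ a, Δ t * π t a * Pdep t a s| :=
                  Finset.abs_sum_le_sum_abs _ _
              _ ≤ ∑ t, ∑ a, |Δ t| * π t a * Pdep t a s := by
                  apply Finset.sum_le_sum; intro t _
                  calc |∑ a, Δ t * π t a * Pdep t a s|
                      ≤ ∑ a, |Δ t * π t a * Pdep t a s| :=
                        Finset.abs_sum_le_sum_abs _ _
                    _ = ∑ a, |Δ t| * π t a * Pdep t a s := by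
                        apply Finset.sum_congr rfl; intro a _
                        rw [abs_mul, abs_mul, abs_of_nonneg (hπ0 t a),
                          abs_of_nonneg (hPdep0 t a s)]
          · calc |∑ t, ∑ a, dtr t * π t a * (Pdep t a s - Ptr t a s)|
                ≤ ∑ t, |∑ a, dtr t * π t a * (Pdep t a s - Ptr t a s)| :=
                  Finset.abs_sum_le_sum_abs _ _
              _ ≤ ∑ t, ∑ a, dtr t * π t a * |Pdep t a s - Ptr t a s| := by
                  apply Finset.sum_le_sum; intro t _
                  calc |∑ a, dtr t * π t a * (Pdep t a s - Ptr t a s)|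
                      ≤ ∑ a, |dtr t * π t a * (Pdep t a s - Ptr t a s)| :=
                        Finset.abs_sum_le_sum_abs _ _
                    _ = ∑ a, dtr t * π t a * |Pdep t a s - Ptr t a s| := by
                        apply Finset.sum_congr rfl; intro a _
                        rw [abs_mul, abs_mul, abs_of_nonneg (hdtr0 t),
                          abs_of_nonneg (hπ0 t a)]
  -- sum habs over s
  have hTV : ∀ t a, ∑ s, |Pdep t a s - Ptr t a s| ≤ 2 * εP := by
    intro t a
    have := hεP t a
    unfold tvDist at this
    have heq : ∑ s, |Ptr t a s - Pdep t a s| = ∑ s, |Pdep t a s - Ptr t a s| := by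
      apply Finset.sum_congr rfl; intro s _; exact abs_sub_comm _ _
    linarith [this, heq ▸ this]
  have hmain : ∑ s, |Δ s| ≤ γ * ∑ s, |Δ s| + γ * (2 * εP) := by
    calc ∑ s, |Δ s|
        ≤ ∑ s, γ * ((∑ t, ∑ a, |Δ t| * π t a * Pdep t a s)
            + ∑ t, ∑ a, dtr t * π t a * |Pdep t a s - Ptr t a s|) :=
          Finset.sum_le_sum (fun s _ => habs s)
      _ = γ * ((∑ s, ∑ t, ∑ a, (|Δ t| * π t a) * Pdep t a s)
            + ∑ s, ∑ t, ∑ a, dtr t * π t a * |Pdep t a s - Ptr t a s|) := by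
          rw [← Finset.mul_sum, Finset.sum_add_distrib]
      _ ≤ γ * ((∑ t, ∑ a, |Δ t| * π t a) + (2 * εP) * ∑ t, dtr t) := by
          apply mul_le_mul_of_nonneg_left _ hγ0.le
          apply add_le_add
          · rw [sum3_collapse (fun t a => |Δ t| * π t a) Pdep hPdep1]
          · calc ∑ s, ∑ t, ∑ a, dtr t * π t a * |Pdep t a s - Ptr t a s|
                = ∑ t, ∑ a, dtr t * π t a * ∑ s, |Pdep t a s - Ptr t a s| := by
                  rw [Finset.sum_comm]
                  apply Finset.sum_congr rfl; intro t _
                  rw [Finset.sum_comm]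
                  apply Finset.sum_congr rfl; intro a _
                  rw [← Finset.mul_sum]
              _ ≤ ∑ t, ∑ a, dtr t * π t a * (2 * εP) := by
                  apply Finset.sum_le_sum; intro t _
                  apply Finset.sum_le_sum; intro a _
                  exact mul_le_mul_of_nonneg_left (hTV t a)
                    (mul_nonneg (hdtr0 t) (hπ0 t a))
              _ = (2 * εP) * ∑ t, dtr t := by
                  rw [Finset.mul_sum]
                  apply Finset.sum_congr rfl; intro t _
                  rw [← Finset.sum_mul, ← Finset.mul_sum, hπ1, mul_one]
                  ring
      _ = γ * ∑ s, |Δ s| + γ * (2 * εP) := by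
          have h1 : ∑ t, ∑ a, |Δ t| * π t a = ∑ t, |Δ t| := by
            apply Finset.sum_congr rfl; intro t _
            rw [← Finset.mul_sum, hπ1, mul_one]
          rw [h1, hdtr1]
          ring
  have hfin : (1 - γ) * ∑ s, |Δ s| ≤ 2 * γ * εP := by nlinarith
  have : ∑ s, |Δ s| ≤ (2 * γ / (1 - γ)) * εP := by
    rw [div_mul_eq_mul_div, le_div_iff₀ h1γ]
    nlinarith
  simpa [hΔdef] using this
end

section
/- In a finite discounted Markov decision process with state space S, action space A, transition kernel P, reward r, discount γ ∈ (0,1), and initial distribution μ, let π_θ (the frozen actor) and π_ref (the refined policy) be two policies. Define Ā(s) = Σ_{a∈A} π_ref(a|s)·A^{π_θ}(s,a), ε_A = max_{s∈S} |Ā(s)|, and δ = max_{s∈S} TV(π_ref(·|s), π_θ(·|s)). Then the conservative improvement decomposition holds: J(π_ref) − J(π_θ) ≥ (1/(1−γ)) · Σ_{s∈S} d^{π_θ}(s)·Ā(s) − (2γ/(1−γ)²) · ε_A · δ. -/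
/-- **Conservative improvement decomposition.** With
`Ā(s) = Σ_a π_ref(a|s)·A^{π_θ}(s,a)`, `ε_A = max_s |Ā(s)|` and
`δ = max_s TV(π_ref(·|s), π_θ(·|s))`:
`J(π_ref) − J(π_θ) ≥ (1/(1−γ))·Σ_s d^{π_θ}(s)·Ā(s) − (2γ/(1−γ)²)·ε_A·δ`. -/
theorem stmt_11 {S A : Type*} [Fintype S] [Fintype A] [Nonempty S] [Nonempty A]
    (γ : ℝ) (hγ : γ ∈ Set.Ioo (0 : ℝ) 1)
    (μ : S → ℝ) (hμ0 : ∀ s, 0 ≤ μ s) (hμ1 : ∑ s, μ s = 1)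
    (P : S → A → S → ℝ) (hP0 : ∀ s a s', 0 ≤ P s a s')
    (hP1 : ∀ s a, ∑ s', P s a s' = 1)
    (r : S → A → ℝ)
    (πθ πref : S → A → ℝ)
    (hπθ0 : ∀ s a, 0 ≤ πθ s a) (hπθ1 : ∀ s, ∑ a, πθ s a = 1)
    (hπref0 : ∀ s a, 0 ≤ πref s a) (hπref1 : ∀ s, ∑ a, πref s a = 1)
    (Vθ Vref : S → ℝ)
    (hVθ : ∀ s, Vθ s = ∑ a, πθ s a * (r s a + γ * ∑ s', P s a s' * Vθ s'))
    (hVref : ∀ s, Vref s = ∑ a, πref s a * (r s a + γ * ∑ s', P s a s' * Vref s'))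
    (dθ : S → ℝ)
    (hdθ : ∀ s, dθ s = (1 - γ) * μ s + γ * ∑ t, ∑ a, dθ t * πθ t a * P t a s)
    (Abar : S → ℝ)
    (hAbar : ∀ s, Abar s =
      ∑ a, πref s a * (r s a + γ * (∑ s', P s a s' * Vθ s') - Vθ s))
    (εA : ℝ)
    (hεA : εA = Finset.univ.sup' Finset.univ_nonempty (fun s => |Abar s|))
    (δ : ℝ)
    (hδ : δ = Finset.univ.sup' Finset.univ_nonempty
      (fun s => tvDist (πref s) (πθ s))) :
    (∑ s, μ s * Vref s) - (∑ s, μ s * Vθ s) ≥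
      (1 / (1 - γ)) * (∑ s, dθ s * Abar s) -
        (2 * γ / (1 - γ) ^ 2) * εA * δ := by
  obtain ⟨hγ0, hγ1⟩ := hγ
  have hβ : (0:ℝ) < 1 - γ := by linarith
  set Δ : S → ℝ := fun s => Vref s - Vθ s with hΔdef
  -- Bellman equation for Δ
  have hΔ : ∀ s, Δ s = Abar s + γ * ∑ a, πref s a * ∑ s', P s a s' * Δ s' := by
    intro s
    have h3 : ∑ a, πref s a * Vθ s = Vθ s := by
      rw [← Finset.sum_mul, hπref1 s, one_mul]
    have e2 : ∀ a, ∑ s', P s a s' * Δ s'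
        = (∑ s', P s a s' * Vref s') - ∑ s', P s a s' * Vθ s' := by
      intro a
      rw [← Finset.sum_sub_distrib]
      exact Finset.sum_congr rfl (fun s' _ => by simp [hΔdef]; ring)
    have main : (∑ a, πref s a * (r s a + γ * ∑ s', P s a s' * Vref s'))
        = (∑ a, πref s a * (r s a + γ * (∑ s', P s a s' * Vθ s') - Vθ s))
          + (∑ a, πref s a * Vθ s)
          + γ * ∑ a, πref s a * ∑ s', P s a s' * Δ s' := by
      rw [Finset.mul_sum, ← Finset.sum_add_distrib, ← Finset.sum_add_distrib]
      refine Finset.sum_congr rfl (fun a _ => ?_)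
      rw [e2 a]; ring
    have hv := hVref s
    simp only [hΔdef]
    rw [hAbar s]
    linarith [main, h3, hv]
  -- sup-norm quantities
  set MΔ : ℝ := Finset.univ.sup' Finset.univ_nonempty (fun s => |Δ s|) with hMΔdef
  have hΔle : ∀ s, |Δ s| ≤ MΔ := fun s => Finset.le_sup' (fun s => |Δ s|) (Finset.mem_univ s)
  have hMΔ0 : 0 ≤ MΔ := le_trans (abs_nonneg _) (hΔle (Classical.arbitrary S))
  have hεAle : ∀ s, |Abar s| ≤ εA := fun s => by
    rw [hεA]; exact Finset.le_sup' (fun s => |Abar s|) (Finset.mem_univ s)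
  have hεA0 : 0 ≤ εA := le_trans (abs_nonneg _) (hεAle (Classical.arbitrary S))
  have htv0 : ∀ s, 0 ≤ tvDist (πref s) (πθ s) := by
    intro s
    unfold tvDist
    positivity
  have hδle : ∀ s, tvDist (πref s) (πθ s) ≤ δ := fun s => by
    rw [hδ]; exact Finset.le_sup' (fun s => tvDist (πref s) (πθ s)) (Finset.mem_univ s)
  have hδ0 : 0 ≤ δ := le_trans (htv0 (Classical.arbitrary S)) (hδle (Classical.arbitrary S))
  -- the key pointwise bound: |Σ_{s'} P s a s' * Δ s'| ≤ MΔ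
  have hPΔ : ∀ s a, |∑ s', P s a s' * Δ s'| ≤ MΔ := by
    intro s a
    calc |∑ s', P s a s' * Δ s'| ≤ ∑ s', |P s a s' * Δ s'| :=
          Finset.abs_sum_le_sum_abs _ _
      _ ≤ ∑ s', P s a s' * MΔ := by
          refine Finset.sum_le_sum (fun s' _ => ?_)
          rw [abs_mul, abs_of_nonneg (hP0 s a s')]
          exact mul_le_mul_of_nonneg_left (hΔle s') (hP0 s a s')
      _ = MΔ := by rw [← Finset.sum_mul, hP1 s a, one_mul]
  -- MΔ ≤ εA / (1 - γ)
  have hMΔbound : (1 - γ) * MΔ ≤ εA := by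
    obtain ⟨s0, _, hs0⟩ := Finset.exists_mem_eq_sup' (Finset.univ_nonempty (α := S))
      (fun s => |Δ s|)
    have h1 : |Δ s0| ≤ εA + γ * MΔ := by
      rw [hΔ s0]
      refine le_trans (abs_add_le _ _) ?_
      have h2 : |γ * ∑ a, πref s0 a * ∑ s', P s0 a s' * Δ s'| ≤ γ * MΔ := by
        rw [abs_mul, abs_of_nonneg hγ0.le]
        refine mul_le_mul_of_nonneg_left ?_ hγ0.le
        calc |∑ a, πref s0 a * ∑ s', P s0 a s' * Δ s'|
            ≤ ∑ a, |πref s0 a * ∑ s', P s0 a s' * Δ s'| := Finset.abs_sum_le_sum_abs _ _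
          _ ≤ ∑ a, πref s0 a * MΔ := by
              refine Finset.sum_le_sum (fun a _ => ?_)
              rw [abs_mul, abs_of_nonneg (hπref0 s0 a)]
              exact mul_le_mul_of_nonneg_left (hPΔ s0 a) (hπref0 s0 a)
          _ = MΔ := by rw [← Finset.sum_mul, hπref1 s0, one_mul]
      linarith [hεAle s0, h2]
    have : MΔ = |Δ s0| := hs0
    linarith [this ▸ h1]
  -- dθ sums to 1
  have hdsum : ∑ s, dθ s = 1 := by
    have h1 : ∑ s, dθ s = (1 - γ) * (∑ s, μ s) + γ * ∑ s, ∑ t, ∑ a, dθ t * πθ t a * P t a s := by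
      rw [Finset.mul_sum, Finset.mul_sum, ← Finset.sum_add_distrib]
      exact Finset.sum_congr rfl (fun s _ => hdθ s)
    rw [hμ1, mul_one] at h1
    have h2 : ∑ s, ∑ t, ∑ a, dθ t * πθ t a * P t a s = ∑ t, dθ t := by
      rw [Finset.sum_comm]
      refine Finset.sum_congr rfl (fun t _ => ?_)
      rw [Finset.sum_comm]
      calc ∑ a, ∑ s, dθ t * πθ t a * P t a s
          = ∑ a, dθ t * πθ t a := by
            refine Finset.sum_congr rfl (fun a _ => ?_)
            rw [← Finset.mul_sum, hP1 t a, mul_one]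
        _ = dθ t := by rw [← Finset.mul_sum, hπθ1 t, mul_one]
      -- done
    rw [h2] at h1
    have h4 : (1 - γ) * (∑ s, dθ s) = (1 - γ) * 1 := by linarith
    exact mul_left_cancel₀ hβ.ne' h4
  -- dθ is nonnegative
  have hd0 : ∀ s, 0 ≤ dθ s := by
    set n : S → ℝ := fun s => max (-(dθ s)) 0 with hndef
    have hn0 : ∀ s, 0 ≤ n s := fun s => le_max_right _ _
    have hnd : ∀ s, -(dθ s) ≤ n s := fun s => le_max_left _ _
    have hstep : ∀ s, n s ≤ γ * ∑ t, ∑ a, n t * πθ t a * P t a s := by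
      intro s
      have hRnn : 0 ≤ γ * ∑ t, ∑ a, n t * πθ t a * P t a s := by
        refine mul_nonneg hγ0.le (Finset.sum_nonneg fun t _ => Finset.sum_nonneg fun a _ => ?_)
        exact mul_nonneg (mul_nonneg (hn0 t) (hπθ0 t a)) (hP0 t a s)
      refine max_le ?_ hRnn
      have h1 : -(dθ s) = -((1 - γ) * μ s) - γ * ∑ t, ∑ a, dθ t * πθ t a * P t a s := by
        rw [hdθ s]; ring
      have h2 : -(γ * ∑ t, ∑ a, dθ t * πθ t a * P t a s)
          ≤ γ * ∑ t, ∑ a, n t * πθ t a * P t a s := by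
        rw [← mul_neg, ← Finset.sum_neg_distrib]
        refine mul_le_mul_of_nonneg_left ?_ hγ0.le
        refine Finset.sum_le_sum (fun t _ => ?_)
        rw [← Finset.sum_neg_distrib]
        refine Finset.sum_le_sum (fun a _ => ?_)
        have : -(dθ t * πθ t a * P t a s) = (-(dθ t)) * πθ t a * P t a s := by ring
        rw [this]
        exact mul_le_mul_of_nonneg_right
          (mul_le_mul_of_nonneg_right (hnd t) (hπθ0 t a)) (hP0 t a s)
      have h3 : -((1 - γ) * μ s) ≤ 0 := by
        have := mul_nonneg hβ.le (hμ0 s); linarith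
      linarith [h1, h2, h3]
    have hsum : ∑ s, n s ≤ γ * ∑ s, n s := by
      calc ∑ s, n s ≤ ∑ s, γ * ∑ t, ∑ a, n t * πθ t a * P t a s :=
            Finset.sum_le_sum (fun s _ => hstep s)
        _ = γ * ∑ s, ∑ t, ∑ a, n t * πθ t a * P t a s := by rw [Finset.mul_sum]
        _ = γ * ∑ t, n t := by
            congr 1
            rw [Finset.sum_comm]
            refine Finset.sum_congr rfl (fun t _ => ?_)
            rw [Finset.sum_comm]
            calc ∑ a, ∑ s, n t * πθ t a * P t a s
                = ∑ a, n t * πθ t a := by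
                  refine Finset.sum_congr rfl (fun a _ => ?_)
                  rw [← Finset.mul_sum, hP1 t a, mul_one]
              _ = n t := by rw [← Finset.mul_sum, hπθ1 t, mul_one]
    have hnsum0 : 0 ≤ ∑ s, n s := Finset.sum_nonneg (fun s _ => hn0 s)
    have hzero : ∑ s, n s = 0 := by nlinarith
    intro s
    have := (Finset.sum_eq_zero_iff_of_nonneg (fun s _ => hn0 s)).mp hzero s (Finset.mem_univ s)
    have h := hnd s
    rw [this] at h
    linarith
  -- key decomposition
  have key1 : (1 - γ) * ∑ s, μ s * Δ s
      = ∑ s, dθ s * Δ s - γ * ∑ s, (∑ t, ∑ a, dθ t * πθ t a * P t a s) * Δ s := by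
    rw [Finset.mul_sum, Finset.mul_sum, ← Finset.sum_sub_distrib]
    refine Finset.sum_congr rfl (fun s _ => ?_)
    linear_combination (-(Δ s)) * hdθ s
  have key2 : ∑ s, dθ s * Δ s
      = ∑ s, dθ s * Abar s + γ * ∑ s, dθ s * ∑ a, πref s a * ∑ s', P s a s' * Δ s' := by
    rw [Finset.mul_sum, ← Finset.sum_add_distrib]
    refine Finset.sum_congr rfl (fun s _ => ?_)
    linear_combination dθ s * hΔ s
  have key3 : ∑ s, (∑ t, ∑ a, dθ t * πθ t a * P t a s) * Δ s
      = ∑ t, dθ t * ∑ a, πθ t a * ∑ s', P t a s' * Δ s' := by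
    simp only [Finset.sum_mul]
    rw [Finset.sum_comm]
    refine Finset.sum_congr rfl (fun t _ => ?_)
    rw [Finset.sum_comm, Finset.mul_sum]
    refine Finset.sum_congr rfl (fun a _ => ?_)
    rw [Finset.mul_sum, Finset.mul_sum]
    exact Finset.sum_congr rfl (fun s _ => by ring)
  -- error term bound
  have herr : ∀ s, |(∑ a, πref s a * ∑ s', P s a s' * Δ s')
      - ∑ a, πθ s a * ∑ s', P s a s' * Δ s'| ≤ 2 * δ * MΔ := by
    intro s
    have h1 : (∑ a, πref s a * ∑ s', P s a s' * Δ s')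
        - ∑ a, πθ s a * ∑ s', P s a s' * Δ s'
        = ∑ a, (πref s a - πθ s a) * ∑ s', P s a s' * Δ s' := by
      rw [← Finset.sum_sub_distrib]
      exact Finset.sum_congr rfl (fun a _ => by ring)
    rw [h1]
    calc |∑ a, (πref s a - πθ s a) * ∑ s', P s a s' * Δ s'|
        ≤ ∑ a, |(πref s a - πθ s a) * ∑ s', P s a s' * Δ s'| :=
          Finset.abs_sum_le_sum_abs _ _
      _ ≤ ∑ a, |πref s a - πθ s a| * MΔ := by
          refine Finset.sum_le_sum (fun a _ => ?_)
          rw [abs_mul]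
          exact mul_le_mul_of_nonneg_left (hPΔ s a) (abs_nonneg _)
      _ = (∑ a, |πref s a - πθ s a|) * MΔ := by rw [Finset.sum_mul]
      _ = 2 * tvDist (πref s) (πθ s) * MΔ := by unfold tvDist; ring
      _ ≤ 2 * δ * MΔ := by
          refine mul_le_mul_of_nonneg_right ?_ hMΔ0
          have := hδle s; linarith
  -- assemble
  have hfinal : (1 - γ) * ∑ s, μ s * Δ s
      ≥ ∑ s, dθ s * Abar s - γ * (2 * δ * MΔ) := by
    rw [key1, key2, key3]
    have hE : ∑ s, dθ s * ∑ a, πref s a * ∑ s', P s a s' * Δ s'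
        - ∑ s, dθ s * ∑ a, πθ s a * ∑ s', P s a s' * Δ s'
        ≥ -(2 * δ * MΔ) := by
      have h1 : ∑ s, dθ s * ∑ a, πref s a * ∑ s', P s a s' * Δ s'
          - ∑ s, dθ s * ∑ a, πθ s a * ∑ s', P s a s' * Δ s'
          = ∑ s, dθ s * ((∑ a, πref s a * ∑ s', P s a s' * Δ s')
            - ∑ a, πθ s a * ∑ s', P s a s' * Δ s') := by
        rw [← Finset.sum_sub_distrib]
        exact Finset.sum_congr rfl (fun s _ => by ring)
      rw [h1]
      have h2 : ∑ s, dθ s * ((∑ a, πref s a * ∑ s', P s a s' * Δ s')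
            - ∑ a, πθ s a * ∑ s', P s a s' * Δ s')
          ≥ ∑ s, dθ s * (-(2 * δ * MΔ)) := by
        refine Finset.sum_le_sum (fun s _ => ?_)
        refine mul_le_mul_of_nonneg_left ?_ (hd0 s)
        have := herr s
        have := neg_abs_le ((∑ a, πref s a * ∑ s', P s a s' * Δ s')
            - ∑ a, πθ s a * ∑ s', P s a s' * Δ s')
        linarith
      have h3 : ∑ s, dθ s * (-(2 * δ * MΔ)) = -(2 * δ * MΔ) := by
        rw [← Finset.sum_mul, hdsum, one_mul]
      linarith
    nlinarith [hE, hγ0]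
  -- conclude
  have hJ : (∑ s, μ s * Vref s) - (∑ s, μ s * Vθ s) = ∑ s, μ s * Δ s := by
    rw [← Finset.sum_sub_distrib]
    exact Finset.sum_congr rfl (fun s _ => by simp [hΔdef]; ring)
  rw [hJ, ge_iff_le]
  rw [show (1 / (1 - γ)) * (∑ s, dθ s * Abar s) - (2 * γ / (1 - γ) ^ 2) * εA * δ
      = ((∑ s, dθ s * Abar s) - 2 * γ * εA * δ / (1 - γ)) / (1 - γ) by
    field_simp]
  rw [div_le_iff₀ hβ]
  have hbd : γ * (2 * δ * MΔ) ≤ 2 * γ * εA * δ / (1 - γ) := by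
    rw [le_div_iff₀ hβ]
    have h1 : (1 - γ) * MΔ ≤ εA := hMΔbound
    nlinarith [mul_nonneg hγ0.le hδ0]
  nlinarith [hfinal]
end

section
/- In a finite discounted Markov decision process with state space S, action space A, transition kernel P, reward r, discount γ ∈ (0,1), and initial distribution μ, let π_θ and π_ref be two policies, and define Ā(s) = Σ_{a∈A} π_ref(a|s)·A^{π_θ}(s,a), ε_A = max_{s∈S} |Ā(s)|, and δ = max_{s∈S} TV(π_ref(·|s), π_θ(·|s)). If Σ_{s∈S} d^{π_θ}(s)·Ā(s) > (2γ/(1−γ)) · ε_A · δ, then J(π_ref) > J(π_θ); that is, when the expected local advantage under the frozen actor's occupancy strictly dominates the conservatism penalty, the refined policy strictly improves over the frozen actor. -/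
/-- **Sufficient condition for strict improvement.** If the expected local
advantage under the frozen actor's occupancy strictly dominates the
conservatism penalty, i.e. `Σ_s d^{π_θ}(s)·Ā(s) > (2γ/(1−γ))·ε_A·δ`, then
`J(π_ref) > J(π_θ)`. -/
theorem stmt_12 {S A : Type*} [Fintype S] [Fintype A] [Nonempty S] [Nonempty A]
    (γ : ℝ) (hγ : γ ∈ Set.Ioo (0 : ℝ) 1)
    (μ : S → ℝ) (hμ0 : ∀ s, 0 ≤ μ s) (hμ1 : ∑ s, μ s = 1)
    (P : S → A → S → ℝ) (hP0 : ∀ s a s', 0 ≤ P s a s')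
    (hP1 : ∀ s a, ∑ s', P s a s' = 1)
    (r : S → A → ℝ)
    (πθ πref : S → A → ℝ)
    (hπθ0 : ∀ s a, 0 ≤ πθ s a) (hπθ1 : ∀ s, ∑ a, πθ s a = 1)
    (hπref0 : ∀ s a, 0 ≤ πref s a) (hπref1 : ∀ s, ∑ a, πref s a = 1)
    (Vθ Vref : S → ℝ)
    (hVθ : ∀ s, Vθ s = ∑ a, πθ s a * (r s a + γ * ∑ s', P s a s' * Vθ s'))
    (hVref : ∀ s, Vref s = ∑ a, πref s a * (r s a + γ * ∑ s', P s a s' * Vref s'))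
    (dθ : S → ℝ)
    (hdθ : ∀ s, dθ s = (1 - γ) * μ s + γ * ∑ t, ∑ a, dθ t * πθ t a * P t a s)
    (Abar : S → ℝ)
    (hAbar : ∀ s, Abar s =
      ∑ a, πref s a * (r s a + γ * (∑ s', P s a s' * Vθ s') - Vθ s))
    (εA : ℝ)
    (hεA : εA = Finset.univ.sup' Finset.univ_nonempty (fun s => |Abar s|))
    (δ : ℝ)
    (hδ : δ = Finset.univ.sup' Finset.univ_nonempty
      (fun s => tvDist (πref s) (πθ s)))
    (hdom : (∑ s, dθ s * Abar s) > (2 * γ / (1 - γ)) * εA * δ) :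
    (∑ s, μ s * Vref s) > ∑ s, μ s * Vθ s := by
  obtain ⟨hγ0, hγ1⟩ := hγ
  have h1γ : (0:ℝ) < 1 - γ := by linarith
  -- W = Vref - Vθ, g s a = expected W after (s,a)
  set W : S → ℝ := fun s => Vref s - Vθ s with hWdef
  set g : S → A → ℝ := fun s a => ∑ s', P s a s' * W s' with hgdef
  -- Bellman-type equation for W
  have hW : ∀ s, W s = Abar s + γ * ∑ a, πref s a * g s a := by
    intro s
    have h1 : Vθ s = ∑ a, πref s a * Vθ s := by
      rw [← Finset.sum_mul, hπref1 s, one_mul]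
    calc W s = Vref s - Vθ s := rfl
      _ = ∑ a, πref s a * (r s a + γ * ∑ s', P s a s' * Vref s')
            - ∑ a, πref s a * Vθ s := by rw [← hVref s, ← h1]
      _ = ∑ a, (πref s a * (r s a + γ * (∑ s', P s a s' * Vθ s') - Vθ s)
            + γ * (πref s a * ∑ s', P s a s' * W s')) := by
          rw [← Finset.sum_sub_distrib]
          refine Finset.sum_congr rfl fun a _ => ?_
          have : ∑ s', P s a s' * W s'
              = (∑ s', P s a s' * Vref s') - ∑ s', P s a s' * Vθ s' := by
            rw [← Finset.sum_sub_distrib]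
            exact Finset.sum_congr rfl fun s' _ => by simp [hWdef]; ring
          rw [this]; ring
      _ = Abar s + γ * ∑ a, πref s a * g s a := by
          rw [Finset.sum_add_distrib, hAbar s, ← Finset.mul_sum]
  -- K : sup of |W|
  set K : ℝ := Finset.univ.sup' Finset.univ_nonempty (fun s => |W s|) with hKdef
  have hKle : ∀ s : S, |W s| ≤ K := by
    intro s; rw [hKdef]; exact Finset.le_sup' (fun s => |W s|) (Finset.mem_univ s)
  have hK0 : 0 ≤ K := le_trans (abs_nonneg _) (hKle Classical.ofNonempty)
  have hεAle : ∀ s : S, |Abar s| ≤ εA := by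
    intro s; rw [hεA]; exact Finset.le_sup' (fun s => |Abar s|) (Finset.mem_univ s)
  have hεA0 : 0 ≤ εA := le_trans (abs_nonneg _) (hεAle Classical.ofNonempty)
  have htv0 : ∀ s : S, 0 ≤ tvDist (πref s) (πθ s) := by
    intro s
    unfold tvDist
    positivity
  have hδle : ∀ s : S, ∑ a, |πref s a - πθ s a| ≤ 2 * δ := by
    intro s
    have : tvDist (πref s) (πθ s) ≤ δ := by
      rw [hδ]; exact Finset.le_sup' (fun s => tvDist (πref s) (πθ s)) (Finset.mem_univ s)
    unfold tvDist at this
    linarith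
  have hδ0 : 0 ≤ δ := by
    refine le_trans (htv0 Classical.ofNonempty) ?_
    rw [hδ]
    exact Finset.le_sup' (fun s => tvDist (πref s) (πθ s)) (Finset.mem_univ Classical.ofNonempty)
  -- bound on |g s a|
  have hg : ∀ s a, |g s a| ≤ K := by
    intro s a
    calc |g s a| ≤ ∑ s', |P s a s' * W s'| := Finset.abs_sum_le_sum_abs _ _
      _ ≤ ∑ s', P s a s' * K := by
          refine Finset.sum_le_sum fun s' _ => ?_
          rw [abs_mul, abs_of_nonneg (hP0 s a s')]
          exact mul_le_mul_of_nonneg_left (hKle s') (hP0 s a s')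
      _ = K := by rw [← Finset.sum_mul, hP1 s a, one_mul]
  -- (1-γ) K ≤ εA
  have hKbound : (1 - γ) * K ≤ εA := by
    obtain ⟨s0, -, hs0⟩ := Finset.exists_mem_eq_sup' (Finset.univ_nonempty) (fun s => |W s|)
    have h1 : |∑ a, πref s0 a * g s0 a| ≤ K := by
      calc |∑ a, πref s0 a * g s0 a| ≤ ∑ a, |πref s0 a * g s0 a| :=
            Finset.abs_sum_le_sum_abs _ _
        _ ≤ ∑ a, πref s0 a * K := by
            refine Finset.sum_le_sum fun a _ => ?_
            rw [abs_mul, abs_of_nonneg (hπref0 s0 a)]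
            exact mul_le_mul_of_nonneg_left (hg s0 a) (hπref0 s0 a)
        _ = K := by rw [← Finset.sum_mul, hπref1 s0, one_mul]
    have h2 : K ≤ εA + γ * K := by
      calc K = |W s0| := hs0
        _ = |Abar s0 + γ * ∑ a, πref s0 a * g s0 a| := by rw [hW s0]
        _ ≤ |Abar s0| + |γ * ∑ a, πref s0 a * g s0 a| := abs_add_le _ _
        _ ≤ εA + γ * K := by
            refine add_le_add (hεAle s0) ?_
            rw [abs_mul, abs_of_pos hγ0]
            exact mul_le_mul_of_nonneg_left h1 (le_of_lt hγ0)
    linarith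
  -- dθ sums to 1 and is nonnegative
  have hdsum : ∑ s, dθ s = 1 := by
    have h : ∑ s, dθ s = (1 - γ) * 1 + γ * ∑ t, dθ t := by
      calc ∑ s, dθ s = ∑ s, ((1 - γ) * μ s + γ * ∑ t, ∑ a, dθ t * πθ t a * P t a s) :=
            Finset.sum_congr rfl fun s _ => hdθ s
        _ = (1 - γ) * ∑ s, μ s + γ * ∑ s, ∑ t, ∑ a, dθ t * πθ t a * P t a s := by
            rw [Finset.sum_add_distrib, ← Finset.mul_sum, ← Finset.mul_sum]
        _ = (1 - γ) * 1 + γ * ∑ t, ∑ a, ∑ s, dθ t * πθ t a * P t a s := by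
            rw [hμ1, Finset.sum_comm]
            congr 2
            exact Finset.sum_congr rfl fun t _ => Finset.sum_comm
        _ = (1 - γ) * 1 + γ * ∑ t, dθ t := by
            congr 2
            refine Finset.sum_congr rfl fun t _ => ?_
            calc ∑ a, ∑ s, dθ t * πθ t a * P t a s
                = ∑ a, dθ t * πθ t a := by
                  refine Finset.sum_congr rfl fun a _ => ?_
                  rw [← Finset.mul_sum, hP1 t a, mul_one]
              _ = dθ t := by rw [← Finset.mul_sum, hπθ1 t, mul_one]
    have h2 : (1 - γ) * (∑ s, dθ s - 1) = 0 := by linear_combination h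
    rcases mul_eq_zero.mp h2 with h3 | h3
    · linarith
    · linarith
  have habs : ∑ s, |dθ s| ≤ 1 := by
    have h : ∑ s, |dθ s| ≤ (1 - γ) * 1 + γ * ∑ t, |dθ t| := by
      calc ∑ s, |dθ s| ≤ ∑ s, ((1 - γ) * μ s + γ * ∑ t, ∑ a, |dθ t| * πθ t a * P t a s) := by
            refine Finset.sum_le_sum fun s _ => ?_
            rw [hdθ s]
            calc |(1 - γ) * μ s + γ * ∑ t, ∑ a, dθ t * πθ t a * P t a s|
                ≤ |(1 - γ) * μ s| + |γ * ∑ t, ∑ a, dθ t * πθ t a * P t a s| := abs_add_le _ _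
              _ ≤ (1 - γ) * μ s + γ * ∑ t, ∑ a, |dθ t| * πθ t a * P t a s := by
                  refine add_le_add ?_ ?_
                  · rw [abs_mul, abs_of_pos h1γ, abs_of_nonneg (hμ0 s)]
                  · rw [abs_mul, abs_of_pos hγ0]
                    refine mul_le_mul_of_nonneg_left ?_ (le_of_lt hγ0)
                    calc |∑ t, ∑ a, dθ t * πθ t a * P t a s|
                        ≤ ∑ t, |∑ a, dθ t * πθ t a * P t a s| := Finset.abs_sum_le_sum_abs _ _
                      _ ≤ ∑ t, ∑ a, |dθ t| * πθ t a * P t a s := by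
                          refine Finset.sum_le_sum fun t _ => ?_
                          calc |∑ a, dθ t * πθ t a * P t a s|
                              ≤ ∑ a, |dθ t * πθ t a * P t a s| := Finset.abs_sum_le_sum_abs _ _
                            _ = ∑ a, |dθ t| * πθ t a * P t a s := by
                                refine Finset.sum_congr rfl fun a _ => ?_
                                rw [abs_mul, abs_mul, abs_of_nonneg (hπθ0 t a),
                                  abs_of_nonneg (hP0 t a s)]
        _ = (1 - γ) * ∑ s, μ s + γ * ∑ s, ∑ t, ∑ a, |dθ t| * πθ t a * P t a s := by
            rw [Finset.sum_add_distrib, ← Finset.mul_sum, ← Finset.mul_sum]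
        _ = (1 - γ) * 1 + γ * ∑ t, |dθ t| := by
            rw [hμ1]
            congr 2
            rw [Finset.sum_comm]
            refine Finset.sum_congr rfl fun t _ => ?_
            rw [Finset.sum_comm]
            calc ∑ a, ∑ s, |dθ t| * πθ t a * P t a s
                = ∑ a, |dθ t| * πθ t a := by
                  refine Finset.sum_congr rfl fun a _ => ?_
                  rw [← Finset.mul_sum, hP1 t a, mul_one]
              _ = |dθ t| := by rw [← Finset.mul_sum, hπθ1 t, mul_one]
    nlinarith [h, h1γ]
  have hd0 : ∀ s, 0 ≤ dθ s := by
    have hzero : ∑ s, (|dθ s| - dθ s) = 0 := by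
      have hle : ∑ s, (|dθ s| - dθ s) ≤ 0 := by
        rw [Finset.sum_sub_distrib, hdsum]; linarith
      have hge : 0 ≤ ∑ s, (|dθ s| - dθ s) :=
        Finset.sum_nonneg fun s _ => by linarith [le_abs_self (dθ s)]
      linarith
    intro s
    have := (Finset.sum_eq_zero_iff_of_nonneg
      (fun s _ => by linarith [le_abs_self (dθ s)] : ∀ s ∈ Finset.univ, (0:ℝ) ≤ |dθ s| - dθ s)).mp
      hzero s (Finset.mem_univ s)
    have := abs_nonneg (dθ s)
    linarith
  -- Key identity:
  -- (1-γ) Σ μ W = Σ dθ Abar + γ Σ_s dθ s Σ_a (πref - πθ) g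
  have hI2 : ∑ s, dθ s * W s
      = ∑ s, dθ s * Abar s + γ * ∑ s, dθ s * ∑ a, πref s a * g s a := by
    calc ∑ s, dθ s * W s
        = ∑ s, (dθ s * Abar s + γ * (dθ s * ∑ a, πref s a * g s a)) := by
          refine Finset.sum_congr rfl fun s _ => ?_
          rw [hW s]; ring
      _ = _ := by rw [Finset.sum_add_distrib, ← Finset.mul_sum]
  have hI3 : ∑ s, dθ s * W s
      = (1 - γ) * ∑ s, μ s * W s + γ * ∑ t, dθ t * ∑ a, πθ t a * g t a := by
    calc ∑ s, dθ s * W s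
        = ∑ s, ((1 - γ) * (μ s * W s) + γ * ∑ t, ∑ a, dθ t * πθ t a * P t a s * W s) := by
          refine Finset.sum_congr rfl fun s _ => ?_
          rw [hdθ s]
          simp only [← Finset.sum_mul]
          ring
      _ = (1 - γ) * ∑ s, μ s * W s + γ * ∑ s, ∑ t, ∑ a, dθ t * πθ t a * P t a s * W s := by
          rw [Finset.sum_add_distrib, ← Finset.mul_sum, ← Finset.mul_sum]
      _ = (1 - γ) * ∑ s, μ s * W s + γ * ∑ t, dθ t * ∑ a, πθ t a * g t a := by
          congr 1
          congr 1
          rw [Finset.sum_comm]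
          refine Finset.sum_congr rfl fun t _ => ?_
          rw [Finset.sum_comm, Finset.mul_sum]
          refine Finset.sum_congr rfl fun a _ => ?_
          simp only [hgdef, Finset.mul_sum]
          refine Finset.sum_congr rfl fun s _ => ?_
          ring
  have hkey : (1 - γ) * ∑ s, μ s * W s
      = ∑ s, dθ s * Abar s + γ * ∑ s, dθ s * ∑ a, (πref s a - πθ s a) * g s a := by
    have hsplit : ∑ s, dθ s * ∑ a, (πref s a - πθ s a) * g s a
        = ∑ s, dθ s * ∑ a, πref s a * g s a - ∑ s, dθ s * ∑ a, πθ s a * g s a := by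
      rw [← Finset.sum_sub_distrib]
      refine Finset.sum_congr rfl fun s _ => ?_
      rw [← mul_sub, ← Finset.sum_sub_distrib]
      congr 1
      exact Finset.sum_congr rfl fun a _ => by ring
    rw [hsplit]
    linarith [hI2, hI3]
  -- bound the perturbation term
  have hpert : |∑ s, dθ s * ∑ a, (πref s a - πθ s a) * g s a| ≤ 2 * δ * K := by
    calc |∑ s, dθ s * ∑ a, (πref s a - πθ s a) * g s a|
        ≤ ∑ s, |dθ s * ∑ a, (πref s a - πθ s a) * g s a| := Finset.abs_sum_le_sum_abs _ _
      _ ≤ ∑ s, dθ s * (2 * δ * K) := by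
          refine Finset.sum_le_sum fun s _ => ?_
          rw [abs_mul, abs_of_nonneg (hd0 s)]
          refine mul_le_mul_of_nonneg_left ?_ (hd0 s)
          calc |∑ a, (πref s a - πθ s a) * g s a|
              ≤ ∑ a, |(πref s a - πθ s a) * g s a| := Finset.abs_sum_le_sum_abs _ _
            _ ≤ ∑ a, |πref s a - πθ s a| * K := by
                refine Finset.sum_le_sum fun a _ => ?_
                rw [abs_mul]
                exact mul_le_mul_of_nonneg_left (hg s a) (abs_nonneg _)
            _ = (∑ a, |πref s a - πθ s a|) * K := by rw [Finset.sum_mul]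
            _ ≤ 2 * δ * K := mul_le_mul_of_nonneg_right (hδle s) hK0
      _ = 2 * δ * K := by rw [← Finset.sum_mul, hdsum, one_mul]
  -- conclude
  have hsub : ∑ s, μ s * W s = (∑ s, μ s * Vref s) - ∑ s, μ s * Vθ s := by
    rw [← Finset.sum_sub_distrib]
    exact Finset.sum_congr rfl fun s _ => by simp [hWdef]; ring
  have hfin : 0 < ∑ s, μ s * W s := by
    have h1 : γ * ∑ s, dθ s * ∑ a, (πref s a - πθ s a) * g s a ≥ -(γ * (2 * δ * K)) := by
      have := neg_abs_le (∑ s, dθ s * ∑ a, (πref s a - πθ s a) * g s a)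
      nlinarith [hpert]
    have h2 : γ * (2 * δ * K) * (1 - γ) ≤ 2 * γ * εA * δ := by
      nlinarith [mul_le_mul_of_nonneg_left hKbound
        (by positivity : (0:ℝ) ≤ 2 * γ * δ)]
    have h3 : (2 * γ / (1 - γ)) * εA * δ = 2 * γ * εA * δ / (1 - γ) := by ring
    have h4 : ∑ s, dθ s * Abar s > 2 * γ * εA * δ / (1 - γ) := h3 ▸ hdom
    have h5 : (1 - γ) * ∑ s, μ s * W s ≥ ∑ s, dθ s * Abar s - γ * (2 * δ * K) := by
      rw [hkey]; linarith
    have h6 : 2 * γ * εA * δ / (1 - γ) ≥ γ * (2 * δ * K) := by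
      rw [ge_iff_le, le_div_iff₀ h1γ]; nlinarith
    nlinarith
  linarith [hsub ▸ hfin]
end

section
/- Let S and A be nonempty finite sets, γ ∈ (0,1), μ an initial distribution on S, r : S×A → ℝ a reward with |r(s,a)| ≤ R_max for all (s,a), and let P_train and P_deploy be two transition kernels on S×A with max_{s∈S, a∈A} TV(P_train(·|s,a), P_deploy(·|s,a)) ≤ ε_P. Then for every policy π, the returns computed in the two MDPs satisfy |J_deploy(π) − J_train(π)| ≤ (2γ·R_max/(1−γ)²) · ε_P. -/
/-- **Robustness of return to deployment transition shift.** If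
`max_{s,a} TV(P_train(·|s,a), P_deploy(·|s,a)) ≤ ε_P` and `|r| ≤ R_max`, then
for every policy `π`, with returns computed via the discounted occupancies
`J(π) = (1/(1−γ))·Σ_s d^π(s)·Σ_a π(a|s)·r(s,a)`,
`|J_deploy(π) − J_train(π)| ≤ (2γ·R_max/(1−γ)²)·ε_P`. -/
theorem stmt_13 {S A : Type*} [Fintype S] [Fintype A] [Nonempty S] [Nonempty A]
    (γ : ℝ) (hγ : γ ∈ Set.Ioo (0 : ℝ) 1)
    (μ : S → ℝ) (hμ0 : ∀ s, 0 ≤ μ s) (hμ1 : ∑ s, μ s = 1)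
    (r : S → A → ℝ) (Rmax : ℝ) (hr : ∀ s a, |r s a| ≤ Rmax)
    (Ptr Pdep : S → A → S → ℝ)
    (hPtr0 : ∀ s a s', 0 ≤ Ptr s a s') (hPtr1 : ∀ s a, ∑ s', Ptr s a s' = 1)
    (hPdep0 : ∀ s a s', 0 ≤ Pdep s a s') (hPdep1 : ∀ s a, ∑ s', Pdep s a s' = 1)
    (εP : ℝ) (hεP : ∀ s a, tvDist (Ptr s a) (Pdep s a) ≤ εP)
    (π : S → A → ℝ)
    (hπ0 : ∀ s a, 0 ≤ π s a) (hπ1 : ∀ s, ∑ a, π s a = 1)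
    (dtr ddep : S → ℝ)
    (hdtr : ∀ s, dtr s = (1 - γ) * μ s + γ * ∑ t, ∑ a, dtr t * π t a * Ptr t a s)
    (hddep : ∀ s, ddep s = (1 - γ) * μ s + γ * ∑ t, ∑ a, ddep t * π t a * Pdep t a s) :
    |(1 / (1 - γ)) * (∑ s, ddep s * ∑ a, π s a * r s a) -
        (1 / (1 - γ)) * (∑ s, dtr s * ∑ a, π s a * r s a)| ≤
      (2 * γ * Rmax / (1 - γ) ^ 2) * εP := by
  obtain ⟨hγ0, hγ1⟩ := hγ
  have h1γ : (0:ℝ) < 1 - γ := by linarith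
  have hR : 0 ≤ Rmax :=
    le_trans (abs_nonneg _) (hr (Classical.arbitrary S) (Classical.arbitrary A))
  have hε : 0 ≤ εP := by
    refine le_trans ?_ (hεP (Classical.arbitrary S) (Classical.arbitrary A))
    unfold tvDist
    positivity
  -- key summation identity
  have key : ∀ (f : S → ℝ) (P : S → A → S → ℝ), (∀ t a, ∑ s, P t a s = 1) →
      ∑ s, ∑ t, ∑ a, f t * π t a * P t a s = ∑ t, f t := by
    intro f P hP
    rw [Finset.sum_comm]
    refine Finset.sum_congr rfl fun t _ => ?_
    rw [Finset.sum_comm]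
    calc ∑ a, ∑ s, f t * π t a * P t a s
        = ∑ a, f t * π t a * ∑ s, P t a s := by
          refine Finset.sum_congr rfl fun a _ => ?_
          rw [Finset.mul_sum]
      _ = f t := by
          simp only [hP, mul_one]
          rw [← Finset.mul_sum, hπ1, mul_one]
  -- bound on ∑ |dtr|
  have hDtr1 : ∑ s, |dtr s| ≤ 1 := by
    have hb : ∀ s, |dtr s| ≤ (1-γ) * μ s + γ * ∑ t, ∑ a, |dtr t| * π t a * Ptr t a s := by
      intro s
      rw [hdtr s]
      refine (abs_add_le _ _).trans ?_
      gcongr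
      · rw [abs_mul, abs_of_nonneg h1γ.le, abs_of_nonneg (hμ0 s)]
      · rw [abs_mul, abs_of_pos hγ0]
        gcongr
        refine (Finset.abs_sum_le_sum_abs _ _).trans ?_
        refine Finset.sum_le_sum fun t _ => ?_
        refine (Finset.abs_sum_le_sum_abs _ _).trans ?_
        refine Finset.sum_le_sum fun a _ => ?_
        rw [abs_mul, abs_mul, abs_of_nonneg (hπ0 t a), abs_of_nonneg (hPtr0 t a s)]
    have h2 := Finset.sum_le_sum (fun s _ => hb s) (s := Finset.univ)
    rw [Finset.sum_add_distrib, ← Finset.mul_sum, hμ1, mul_one,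
      ← Finset.mul_sum, key (fun t => |dtr t|) Ptr hPtr1] at h2
    nlinarith [h2]
  -- recursion for the difference
  have hδ : ∀ s, ddep s - dtr s = γ * ∑ t, ∑ a,
      ((ddep t - dtr t) * π t a * Pdep t a s + dtr t * π t a * (Pdep t a s - Ptr t a s)) := by
    intro s
    have h3 : ∑ t, ∑ a, ((ddep t - dtr t) * π t a * Pdep t a s
          + dtr t * π t a * (Pdep t a s - Ptr t a s))
        = (∑ t, ∑ a, ddep t * π t a * Pdep t a s) - ∑ t, ∑ a, dtr t * π t a * Ptr t a s := by
      rw [← Finset.sum_sub_distrib]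
      refine Finset.sum_congr rfl fun t _ => ?_
      rw [← Finset.sum_sub_distrib]
      refine Finset.sum_congr rfl fun a _ => ?_
      ring
    rw [h3, hddep s, hdtr s]; ring
  -- bound on D := ∑ |ddep - dtr|
  have hD : (1 - γ) * ∑ s, |ddep s - dtr s| ≤ 2 * γ * εP := by
    have hb : ∀ s, |ddep s - dtr s| ≤
        γ * ((∑ t, ∑ a, |ddep t - dtr t| * π t a * Pdep t a s)
          + ∑ t, ∑ a, |dtr t| * π t a * |Pdep t a s - Ptr t a s|) := by
      intro s
      rw [hδ s, abs_mul, abs_of_pos hγ0]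
      gcongr
      rw [← Finset.sum_add_distrib]
      refine (Finset.abs_sum_le_sum_abs _ _).trans ?_
      refine Finset.sum_le_sum fun t _ => ?_
      rw [← Finset.sum_add_distrib]
      refine (Finset.abs_sum_le_sum_abs _ _).trans ?_
      refine Finset.sum_le_sum fun a _ => ?_
      refine (abs_add_le _ _).trans ?_
      gcongr
      · rw [abs_mul, abs_mul, abs_of_nonneg (hπ0 t a), abs_of_nonneg (hPdep0 t a s)]
      · rw [abs_mul, abs_mul, abs_of_nonneg (hπ0 t a)]
    have h2 := Finset.sum_le_sum (fun s _ => hb s) (s := Finset.univ)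
    rw [← Finset.mul_sum, Finset.sum_add_distrib,
      key (fun t => |ddep t - dtr t|) Pdep hPdep1] at h2
    -- bound the perturbation term
    have hpert : ∑ s, ∑ t, ∑ a, |dtr t| * π t a * |Pdep t a s - Ptr t a s| ≤ 2 * εP := by
      have hsw : ∑ s, ∑ t, ∑ a, |dtr t| * π t a * |Pdep t a s - Ptr t a s|
          = ∑ t, ∑ a, |dtr t| * π t a * ∑ s, |Pdep t a s - Ptr t a s| := by
        rw [Finset.sum_comm]
        refine Finset.sum_congr rfl fun t _ => ?_
        rw [Finset.sum_comm]
        refine Finset.sum_congr rfl fun a _ => ?_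
        rw [Finset.mul_sum]
      rw [hsw]
      have hbd : ∀ t a, |dtr t| * π t a * ∑ s, |Pdep t a s - Ptr t a s|
          ≤ |dtr t| * π t a * (2 * εP) := by
        intro t a
        have h4 : ∑ s, |Pdep t a s - Ptr t a s| ≤ 2 * εP := by
          have := hεP t a
          unfold tvDist at this
          have heq : ∑ s, |Pdep t a s - Ptr t a s| = ∑ s, |Ptr t a s - Pdep t a s| := by
            refine Finset.sum_congr rfl fun s _ => ?_
            rw [abs_sub_comm]
          rw [heq]; linarith
        have := mul_le_mul_of_nonneg_left h4 (mul_nonneg (abs_nonneg (dtr t)) (hπ0 t a))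
        linarith [this]
      calc ∑ t, ∑ a, |dtr t| * π t a * ∑ s, |Pdep t a s - Ptr t a s|
          ≤ ∑ t, ∑ a, |dtr t| * π t a * (2 * εP) :=
            Finset.sum_le_sum fun t _ => Finset.sum_le_sum fun a _ => hbd t a
        _ = (2 * εP) * ∑ t, |dtr t| := by
            rw [Finset.mul_sum]
            refine Finset.sum_congr rfl fun t _ => ?_
            rw [← Finset.sum_mul, ← Finset.mul_sum, hπ1, mul_one]
            ring
        _ ≤ 2 * εP := by nlinarith [hDtr1]
    nlinarith [h2, hpert]
  -- final bound
  have hf : ∀ s, |∑ a, π s a * r s a| ≤ Rmax := by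
    intro s
    refine (Finset.abs_sum_le_sum_abs _ _).trans ?_
    calc ∑ a, |π s a * r s a| ≤ ∑ a, π s a * Rmax := by
          refine Finset.sum_le_sum fun a _ => ?_
          rw [abs_mul, abs_of_nonneg (hπ0 s a)]
          exact mul_le_mul_of_nonneg_left (hr s a) (hπ0 s a)
      _ = Rmax := by rw [← Finset.sum_mul, hπ1, one_mul]
  have hmain : |∑ s, (ddep s - dtr s) * ∑ a, π s a * r s a|
      ≤ Rmax * ∑ s, |ddep s - dtr s| := by
    refine (Finset.abs_sum_le_sum_abs _ _).trans ?_
    rw [Finset.mul_sum]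
    refine Finset.sum_le_sum fun s _ => ?_
    rw [abs_mul]
    calc |ddep s - dtr s| * |∑ a, π s a * r s a|
        ≤ |ddep s - dtr s| * Rmax :=
          mul_le_mul_of_nonneg_left (hf s) (abs_nonneg _)
      _ = Rmax * |ddep s - dtr s| := by ring
  have hrw : (1 / (1 - γ)) * (∑ s, ddep s * ∑ a, π s a * r s a) -
      (1 / (1 - γ)) * (∑ s, dtr s * ∑ a, π s a * r s a)
      = (1 / (1 - γ)) * ∑ s, (ddep s - dtr s) * ∑ a, π s a * r s a := by
    rw [← mul_sub, ← Finset.sum_sub_distrib]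
    congr 1
    refine Finset.sum_congr rfl fun s _ => ?_
    ring
  rw [hrw, abs_mul, abs_of_pos (by positivity : (0:ℝ) < 1 / (1 - γ))]
  have hDnn : 0 ≤ ∑ s, |ddep s - dtr s| := Finset.sum_nonneg fun s _ => abs_nonneg _
  have hD' : ∑ s, |ddep s - dtr s| ≤ 2 * γ * εP / (1 - γ) := by
    rw [le_div_iff₀ h1γ]; nlinarith [hD]
  calc (1 / (1 - γ)) * |∑ s, (ddep s - dtr s) * ∑ a, π s a * r s a|
      ≤ (1 / (1 - γ)) * (Rmax * (2 * γ * εP / (1 - γ))) := by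
        refine mul_le_mul_of_nonneg_left ?_ (by positivity)
        refine hmain.trans ?_
        exact mul_le_mul_of_nonneg_left hD' hR
    _ = (2 * γ * Rmax / (1 - γ) ^ 2) * εP := by
        field_simp
end

section
/- Let S and A be nonempty finite sets, γ ∈ (0,1), μ an initial distribution on S, r : S×A → ℝ a reward with |r(s,a)| ≤ R_max for all (s,a), and let P_train and P_deploy be two transition kernels on S×A with max_{s∈S, a∈A} TV(P_train(·|s,a), P_deploy(·|s,a)) ≤ ε_P. Let π_θ and π_ref be two policies, and in the training MDP define Ā(s) = Σ_{a∈A} π_ref(a|s)·A_train^{π_θ}(s,a), ε_A = max_{s∈S} |Ā(s)|, and δ = max_{s∈S} TV(π_ref(·|s), π_θ(·|s)). Then the deployment-side improvement satisfies J_deploy(π_ref) − J_deploy(π_θ) ≥ (1/(1−γ)) · Σ_{s∈S} d_train^{π_θ}(s)·Ā(s) − (2γ/(1−γ)²) · ε_A · δ − (4γ·R_max/(1−γ)²) · ε_P. -/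
namespace Stmt14Aux

lemma tvDist_nonneg {X : Type*} [Fintype X] (p q : X → ℝ) : 0 ≤ tvDist p q := by
  unfold tvDist
  positivity

lemma tvDist_comm {X : Type*} [Fintype X] (p q : X → ℝ) : tvDist p q = tvDist q p := by
  unfold tvDist
  congr 1
  exact Finset.sum_congr rfl fun x _ => abs_sub_comm _ _

lemma abs_sum_mul_le {X : Type*} [Fintype X] (w f : X → ℝ) (C : ℝ)
    (hw : ∀ x, 0 ≤ w x) (hf : ∀ x, |f x| ≤ C) :
    |∑ x, w x * f x| ≤ (∑ x, w x) * C := by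
  calc |∑ x, w x * f x| ≤ ∑ x, |w x * f x| := Finset.abs_sum_le_sum_abs _ _
    _ ≤ ∑ x, w x * C := by
        refine Finset.sum_le_sum fun x _ => ?_
        rw [abs_mul, abs_of_nonneg (hw x)]
        exact mul_le_mul_of_nonneg_left (hf x) (hw x)
    _ = (∑ x, w x) * C := by rw [Finset.sum_mul]

lemma abs_sum_sub_mul_le {X : Type*} [Fintype X] (p q f : X → ℝ) (C : ℝ)
    (hf : ∀ x, |f x| ≤ C) :
    |∑ x, (p x - q x) * f x| ≤ 2 * tvDist p q * C := by
  have h2 : 2 * tvDist p q * C = ∑ x, |p x - q x| * C := by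
    rw [← Finset.sum_mul]; unfold tvDist; ring
  rw [h2]
  calc |∑ x, (p x - q x) * f x| ≤ ∑ x, |(p x - q x) * f x| :=
        Finset.abs_sum_le_sum_abs _ _
    _ ≤ ∑ x, |p x - q x| * C := by
        refine Finset.sum_le_sum fun x _ => ?_
        rw [abs_mul]
        exact mul_le_mul_of_nonneg_left (hf x) (abs_nonneg _)

noncomputable def snorm {S : Type*} [Fintype S] [Nonempty S] (f : S → ℝ) : ℝ :=
  Finset.univ.sup' Finset.univ_nonempty (fun s => |f s|)

lemma le_snorm {S : Type*} [Fintype S] [Nonempty S] (f : S → ℝ) (s : S) : |f s| ≤ snorm f :=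
  Finset.le_sup' (fun s => |f s|) (Finset.mem_univ s)

lemma snorm_le {S : Type*} [Fintype S] [Nonempty S] {f : S → ℝ} {C : ℝ}
    (h : ∀ s, |f s| ≤ C) : snorm f ≤ C :=
  Finset.sup'_le _ _ fun s _ => h s

lemma snorm_nonneg {S : Type*} [Fintype S] [Nonempty S] (f : S → ℝ) : 0 ≤ snorm f :=
  (abs_nonneg _).trans (le_snorm f (Classical.arbitrary S))

lemma geo_bound {γ x c : ℝ} (hγ : γ < 1) (h : x ≤ c + γ * x) : x ≤ c / (1 - γ) := by
  rw [le_div_iff₀ (by linarith)]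
  nlinarith

end Stmt14Aux

namespace Stmt14Aux

section Bellman

variable {S A : Type*} [Fintype S] [Fintype A] [Nonempty S] [Nonempty A]
variable {γ : ℝ}

lemma sum_P_mul {P : S → A → S → ℝ} (hP1 : ∀ s a, ∑ s', P s a s' = 1)
    (V W : S → ℝ) (s : S) (a : A) :
    (∑ s', P s a s' * V s') - (∑ s', P s a s' * W s')
      = ∑ s', P s a s' * (V s' - W s') := by
  rw [← Finset.sum_sub_distrib]
  exact Finset.sum_congr rfl fun s' _ => by ring

lemma bellman_norm_le (hγ0 : 0 ≤ γ) (hγ1 : γ < 1)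
    (r : S → A → ℝ) (Rmax : ℝ) (hr : ∀ s a, |r s a| ≤ Rmax)
    (P : S → A → S → ℝ) (hP0 : ∀ s a s', 0 ≤ P s a s')
    (hP1 : ∀ s a, ∑ s', P s a s' = 1)
    (π : S → A → ℝ) (hπ0 : ∀ s a, 0 ≤ π s a) (hπ1 : ∀ s, ∑ a, π s a = 1)
    (V : S → ℝ)
    (hV : ∀ s, V s = ∑ a, π s a * (r s a + γ * ∑ s', P s a s' * V s')) :
    snorm V ≤ Rmax / (1 - γ) := by
  apply geo_bound hγ1
  apply snorm_le
  intro s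
  rw [hV s]
  have key : ∀ a, |r s a + γ * ∑ s', P s a s' * V s'| ≤ Rmax + γ * snorm V := by
    intro a
    refine (abs_add_le _ _).trans ?_
    have h1 : |∑ s', P s a s' * V s'| ≤ snorm V := by
      have := abs_sum_mul_le (P s a) V (snorm V) (hP0 s a) (le_snorm V)
      rwa [hP1 s a, one_mul] at this
    have h2 : |γ * ∑ s', P s a s' * V s'| ≤ γ * snorm V := by
      rw [abs_mul, abs_of_nonneg hγ0]
      exact mul_le_mul_of_nonneg_left h1 hγ0
    linarith [hr s a]
  have := abs_sum_mul_le (π s) (fun a => r s a + γ * ∑ s', P s a s' * V s')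
    (Rmax + γ * snorm V) (hπ0 s) key
  rwa [hπ1 s, one_mul] at this

lemma bellman_exists (hγ0 : 0 < γ) (hγ1 : γ < 1)
    (r : S → A → ℝ)
    (P : S → A → S → ℝ) (hP0 : ∀ s a s', 0 ≤ P s a s')
    (hP1 : ∀ s a, ∑ s', P s a s' = 1)
    (π : S → A → ℝ) (hπ0 : ∀ s a, 0 ≤ π s a) (hπ1 : ∀ s, ∑ a, π s a = 1) :
    ∃ V : S → ℝ, ∀ s, V s = ∑ a, π s a * (r s a + γ * ∑ s', P s a s' * V s') := by
  set T : (S → ℝ) → (S → ℝ) :=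
    fun V s => ∑ a, π s a * (r s a + γ * ∑ s', P s a s' * V s') with hT
  have hC : ContractingWith ⟨γ, hγ0.le⟩ T := by
    constructor
    · exact_mod_cast hγ1
    · apply LipschitzWith.of_dist_le_mul
      intro V W
      have hd : (0:ℝ) ≤ γ * dist V W := mul_nonneg hγ0.le dist_nonneg
      show dist (T V) (T W) ≤ γ * dist V W
      rw [dist_pi_le_iff hd]
      intro s
      rw [Real.dist_eq]
      have hdiff : T V s - T W s
          = ∑ a, π s a * (γ * ∑ s', P s a s' * (V s' - W s')) := by
        simp only [hT]
        rw [← Finset.sum_sub_distrib]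
        refine Finset.sum_congr rfl fun a _ => ?_
        rw [← sum_P_mul hP1 V W s a]
        ring
      rw [hdiff]
      have key : ∀ a, |γ * ∑ s', P s a s' * (V s' - W s')| ≤ γ * dist V W := by
        intro a
        rw [abs_mul, abs_of_nonneg hγ0.le]
        refine mul_le_mul_of_nonneg_left ?_ hγ0.le
        have := abs_sum_mul_le (P s a) (fun s' => V s' - W s') (dist V W)
          (hP0 s a) (fun s' => by rw [← Real.dist_eq]; exact dist_le_pi_dist V W s')
        rwa [hP1 s a, one_mul] at this
      have := abs_sum_mul_le (π s) (fun a => γ * ∑ s', P s a s' * (V s' - W s'))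
        (γ * dist V W) (hπ0 s) key
      rwa [hπ1 s, one_mul] at this
  refine ⟨hC.fixedPoint T, fun s => ?_⟩
  conv_lhs => rw [← hC.fixedPoint_isFixedPt]

lemma simulation_bound (hγ0 : 0 < γ) (hγ1 : γ < 1)
    (r : S → A → ℝ) (Rmax : ℝ) (hr : ∀ s a, |r s a| ≤ Rmax)
    (Ptr Pdep : S → A → S → ℝ)
    (hPtr0 : ∀ s a s', 0 ≤ Ptr s a s') (hPtr1 : ∀ s a, ∑ s', Ptr s a s' = 1)
    (hPdep0 : ∀ s a s', 0 ≤ Pdep s a s') (hPdep1 : ∀ s a, ∑ s', Pdep s a s' = 1)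
    (εP : ℝ) (hεP : ∀ s a, tvDist (Ptr s a) (Pdep s a) ≤ εP)
    (π : S → A → ℝ) (hπ0 : ∀ s a, 0 ≤ π s a) (hπ1 : ∀ s, ∑ a, π s a = 1)
    (Vtr Vdep : S → ℝ)
    (hVtr : ∀ s, Vtr s = ∑ a, π s a * (r s a + γ * ∑ s', Ptr s a s' * Vtr s'))
    (hVdep : ∀ s, Vdep s = ∑ a, π s a * (r s a + γ * ∑ s', Pdep s a s' * Vdep s')) :
    snorm (fun s => Vdep s - Vtr s) ≤ 2 * γ * εP * Rmax / (1 - γ) ^ 2 := by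
  have hεP0 : 0 ≤ εP := (tvDist_nonneg _ _).trans
    (hεP (Classical.arbitrary S) (Classical.arbitrary A))
  have hVtrn : snorm Vtr ≤ Rmax / (1 - γ) :=
    bellman_norm_le hγ0.le hγ1 r Rmax hr Ptr hPtr0 hPtr1 π hπ0 hπ1 Vtr hVtr
  set D : S → ℝ := fun s => Vdep s - Vtr s with hD
  have main : snorm D ≤ (γ * (2 * εP * (Rmax / (1 - γ)))) / (1 - γ) := by
    apply geo_bound hγ1
    apply snorm_le
    intro s
    have hDs : D s = ∑ a, π s a *
        (γ * ((∑ s', Pdep s a s' * D s') + ∑ s', (Pdep s a s' - Ptr s a s') * Vtr s')) := by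
      simp only [hD]
      rw [hVdep s, hVtr s, ← Finset.sum_sub_distrib]
      refine Finset.sum_congr rfl fun a _ => ?_
      have e1 : (∑ s', Pdep s a s' * D s') + ∑ s', (Pdep s a s' - Ptr s a s') * Vtr s'
          = (∑ s', Pdep s a s' * Vdep s') - ∑ s', Ptr s a s' * Vtr s' := by
        simp only [hD]
        rw [← Finset.sum_add_distrib, ← Finset.sum_sub_distrib]
        exact Finset.sum_congr rfl fun s' _ => by ring
      rw [e1]
      ring
    rw [hDs]
    have key : ∀ a, |γ * ((∑ s', Pdep s a s' * D s')
        + ∑ s', (Pdep s a s' - Ptr s a s') * Vtr s')|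
        ≤ γ * (2 * εP * (Rmax / (1 - γ))) + γ * snorm D := by
      intro a
      rw [abs_mul, abs_of_nonneg hγ0.le, ← mul_add]
      refine mul_le_mul_of_nonneg_left ?_ hγ0.le
      refine (abs_add_le _ _).trans ?_
      have h1 : |∑ s', Pdep s a s' * D s'| ≤ snorm D := by
        have := abs_sum_mul_le (Pdep s a) D (snorm D) (hPdep0 s a) (le_snorm D)
        rwa [hPdep1 s a, one_mul] at this
      have h2 : |∑ s', (Pdep s a s' - Ptr s a s') * Vtr s'|
          ≤ 2 * εP * (Rmax / (1 - γ)) := by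
        have hb := abs_sum_sub_mul_le (Pdep s a) (Ptr s a) Vtr (snorm Vtr) (le_snorm Vtr)
        have htv : 2 * tvDist (Pdep s a) (Ptr s a) * snorm Vtr
            ≤ 2 * εP * (Rmax / (1 - γ)) := by
          have h3 : tvDist (Pdep s a) (Ptr s a) ≤ εP := by
            rw [tvDist_comm]; exact hεP s a
          have h4 : 2 * tvDist (Pdep s a) (Ptr s a) * snorm Vtr ≤ 2 * εP * snorm Vtr := by
            have := mul_le_mul_of_nonneg_right (by linarith : 2 * tvDist (Pdep s a) (Ptr s a) ≤ 2 * εP) (snorm_nonneg Vtr)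
            exact this
          refine h4.trans ?_
          exact mul_le_mul_of_nonneg_left hVtrn (by linarith)
        exact hb.trans htv
      linarith
    have := abs_sum_mul_le (π s)
      (fun a => γ * ((∑ s', Pdep s a s' * D s')
        + ∑ s', (Pdep s a s' - Ptr s a s') * Vtr s'))
      (γ * (2 * εP * (Rmax / (1 - γ))) + γ * snorm D) (hπ0 s) key
    rwa [hπ1 s, one_mul] at this
  refine main.trans (le_of_eq ?_)
  field_simp

end Bellman
end Stmt14Aux

/-- **Deployment-side improvement bound.** Combining the conservative
improvement decomposition in the training MDP with the transition-shift
robustness bound: with `Ā` the expected train-side advantage of `π_ref` under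
`π_θ`, `ε_A = max_s |Ā(s)|`, `δ = max_s TV(π_ref(·|s), π_θ(·|s))`,
`|r| ≤ R_max`, and `max_{s,a} TV(P_train(·|s,a), P_deploy(·|s,a)) ≤ ε_P`,
`J_deploy(π_ref) − J_deploy(π_θ) ≥ (1/(1−γ))·Σ_s d_train^{π_θ}(s)·Ā(s)
  − (2γ/(1−γ)²)·ε_A·δ − (4γ·R_max/(1−γ)²)·ε_P`. -/
theorem stmt_14 {S A : Type*} [Fintype S] [Fintype A] [Nonempty S] [Nonempty A]
    (γ : ℝ) (hγ : γ ∈ Set.Ioo (0 : ℝ) 1)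
    (μ : S → ℝ) (hμ0 : ∀ s, 0 ≤ μ s) (hμ1 : ∑ s, μ s = 1)
    (r : S → A → ℝ) (Rmax : ℝ) (hr : ∀ s a, |r s a| ≤ Rmax)
    (Ptr Pdep : S → A → S → ℝ)
    (hPtr0 : ∀ s a s', 0 ≤ Ptr s a s') (hPtr1 : ∀ s a, ∑ s', Ptr s a s' = 1)
    (hPdep0 : ∀ s a s', 0 ≤ Pdep s a s') (hPdep1 : ∀ s a, ∑ s', Pdep s a s' = 1)
    (εP : ℝ) (hεP : ∀ s a, tvDist (Ptr s a) (Pdep s a) ≤ εP)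
    (πθ πref : S → A → ℝ)
    (hπθ0 : ∀ s a, 0 ≤ πθ s a) (hπθ1 : ∀ s, ∑ a, πθ s a = 1)
    (hπref0 : ∀ s a, 0 ≤ πref s a) (hπref1 : ∀ s, ∑ a, πref s a = 1)
    (Vθtr : S → ℝ)
    (hVθtr : ∀ s, Vθtr s = ∑ a, πθ s a * (r s a + γ * ∑ s', Ptr s a s' * Vθtr s'))
    (Vθdep Vrefdep : S → ℝ)
    (hVθdep : ∀ s, Vθdep s =
      ∑ a, πθ s a * (r s a + γ * ∑ s', Pdep s a s' * Vθdep s'))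
    (hVrefdep : ∀ s, Vrefdep s =
      ∑ a, πref s a * (r s a + γ * ∑ s', Pdep s a s' * Vrefdep s'))
    (dθtr : S → ℝ)
    (hdθtr : ∀ s, dθtr s =
      (1 - γ) * μ s + γ * ∑ t, ∑ a, dθtr t * πθ t a * Ptr t a s)
    (Abar : S → ℝ)
    (hAbar : ∀ s, Abar s =
      ∑ a, πref s a * (r s a + γ * (∑ s', Ptr s a s' * Vθtr s') - Vθtr s))
    (εA : ℝ)
    (hεA : εA = Finset.univ.sup' Finset.univ_nonempty (fun s => |Abar s|))
    (δ : ℝ)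
    (hδ : δ = Finset.univ.sup' Finset.univ_nonempty
      (fun s => tvDist (πref s) (πθ s))) :
    (∑ s, μ s * Vrefdep s) - (∑ s, μ s * Vθdep s) ≥
      (1 / (1 - γ)) * (∑ s, dθtr s * Abar s) -
        (2 * γ / (1 - γ) ^ 2) * εA * δ -
        (4 * γ * Rmax / (1 - γ) ^ 2) * εP := by
  classical
  open Stmt14Aux in
  obtain ⟨hβ0, hβ1⟩ := hγ
  have h1γ : (0:ℝ) < 1 - γ := by linarith
  -- abbreviations for εA, δ bounds
  have hεA' : ∀ s, |Abar s| ≤ εA := by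
    intro s; rw [hεA]; exact Stmt14Aux.le_snorm Abar s
  have hεA0 : 0 ≤ εA := (abs_nonneg _).trans (hεA' (Classical.arbitrary S))
  have hδ' : ∀ s, tvDist (πref s) (πθ s) ≤ δ := by
    intro s; rw [hδ]
    exact Finset.le_sup' (fun s => tvDist (πref s) (πθ s)) (Finset.mem_univ s)
  have hδ0 : 0 ≤ δ := (Stmt14Aux.tvDist_nonneg _ _).trans (hδ' (Classical.arbitrary S))
  -- the reference value function in the training MDP
  obtain ⟨Vreftr, hVreftr⟩ :=
    Stmt14Aux.bellman_exists hβ0 hβ1 r Ptr hPtr0 hPtr1 πref hπref0 hπref1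
  set Dtr : S → ℝ := fun s => Vreftr s - Vθtr s with hDtrdef
  -- Bellman equation for Dtr
  have hDtr_eq : ∀ s, Dtr s
      = Abar s + γ * ∑ a, πref s a * ∑ s', Ptr s a s' * Dtr s' := by
    intro s
    have h1 : Abar s
        = (∑ a, πref s a * (r s a + γ * ∑ s', Ptr s a s' * Vθtr s')) - Vθtr s := by
      rw [hAbar s]
      have h2 : ∑ a, πref s a * (r s a + γ * (∑ s', Ptr s a s' * Vθtr s') - Vθtr s)
          = (∑ a, πref s a * (r s a + γ * ∑ s', Ptr s a s' * Vθtr s'))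
            - (∑ a, πref s a) * Vθtr s := by
        rw [Finset.sum_mul, ← Finset.sum_sub_distrib]
        exact Finset.sum_congr rfl fun a _ => by ring
      rw [h2, hπref1 s, one_mul]
    have h3 : (∑ a, πref s a * (r s a + γ * ∑ s', Ptr s a s' * Vreftr s'))
        - (∑ a, πref s a * (r s a + γ * ∑ s', Ptr s a s' * Vθtr s'))
        = γ * ∑ a, πref s a * ∑ s', Ptr s a s' * Dtr s' := by
      rw [← Finset.sum_sub_distrib, Finset.mul_sum]
      refine Finset.sum_congr rfl fun a _ => ?_
      rw [← Stmt14Aux.sum_P_mul hPtr1 Vreftr Vθtr s a]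
      ring
    have h4 : Dtr s = Vreftr s - Vθtr s := rfl
    rw [h4, hVreftr s, h1]
    linarith [h3]
  -- sup-norm bound on Dtr
  have hDtrn : Stmt14Aux.snorm Dtr ≤ εA / (1 - γ) := by
    apply Stmt14Aux.geo_bound hβ1
    apply Stmt14Aux.snorm_le
    intro s
    rw [hDtr_eq s]
    have key : |γ * ∑ a, πref s a * ∑ s', Ptr s a s' * Dtr s'|
        ≤ γ * Stmt14Aux.snorm Dtr := by
      rw [abs_mul, abs_of_nonneg hβ0.le]
      refine mul_le_mul_of_nonneg_left ?_ hβ0.le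
      have inner : ∀ a, |∑ s', Ptr s a s' * Dtr s'| ≤ Stmt14Aux.snorm Dtr := by
        intro a
        have := Stmt14Aux.abs_sum_mul_le (Ptr s a) Dtr (Stmt14Aux.snorm Dtr)
          (hPtr0 s a) (Stmt14Aux.le_snorm Dtr)
        rwa [hPtr1 s a, one_mul] at this
      have := Stmt14Aux.abs_sum_mul_le (πref s)
        (fun a => ∑ s', Ptr s a s' * Dtr s') (Stmt14Aux.snorm Dtr) (hπref0 s) inner
      rwa [hπref1 s, one_mul] at this
    calc |Abar s + γ * ∑ a, πref s a * ∑ s', Ptr s a s' * Dtr s'|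
        ≤ |Abar s| + |γ * ∑ a, πref s a * ∑ s', Ptr s a s' * Dtr s'| := abs_add_le _ _
      _ ≤ εA + γ * Stmt14Aux.snorm Dtr := add_le_add (hεA' s) key
  -- marginalization identity
  have marg : ∀ w : S → ℝ,
      ∑ s, ∑ t, ∑ a, w t * πθ t a * Ptr t a s = ∑ t, w t := by
    intro w
    rw [Finset.sum_comm]
    refine Finset.sum_congr rfl fun t _ => ?_
    rw [Finset.sum_comm]
    have h1 : ∀ a, ∑ s, w t * πθ t a * Ptr t a s = w t * πθ t a := by
      intro a; rw [← Finset.mul_sum, hPtr1, mul_one]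
    calc ∑ a, ∑ s, w t * πθ t a * Ptr t a s = ∑ a, w t * πθ t a :=
          Finset.sum_congr rfl fun a _ => h1 a
      _ = w t := by rw [← Finset.mul_sum, hπθ1, mul_one]
  -- occupancy sums to one
  have hdsum : ∑ s, dθtr s = 1 := by
    have e : ∑ s, dθtr s = (1 - γ) * (∑ s, μ s)
        + γ * ∑ s, ∑ t, ∑ a, dθtr t * πθ t a * Ptr t a s := by
      calc ∑ s, dθtr s
          = ∑ s, ((1 - γ) * μ s + γ * ∑ t, ∑ a, dθtr t * πθ t a * Ptr t a s) :=
            Finset.sum_congr rfl fun s _ => hdθtr s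
        _ = (1 - γ) * (∑ s, μ s)
            + γ * ∑ s, ∑ t, ∑ a, dθtr t * πθ t a * Ptr t a s := by
            rw [Finset.sum_add_distrib, ← Finset.mul_sum, ← Finset.mul_sum]
    rw [hμ1, marg dθtr, mul_one] at e
    have e2 : (1 - γ) * (∑ s, dθtr s) = (1 - γ) * 1 := by linear_combination e
    exact mul_left_cancel₀ (by linarith) e2
  -- occupancy is nonnegative
  have hd0 : ∀ s, 0 ≤ dθtr s := by
    set n : S → ℝ := fun s => max (-dθtr s) 0 with hn
    have hn0 : ∀ s, 0 ≤ n s := fun s => le_max_right _ _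
    have hnd : ∀ s, -dθtr s ≤ n s := fun s => le_max_left _ _
    have step : ∀ s, n s ≤ γ * ∑ t, ∑ a, n t * πθ t a * Ptr t a s := by
      intro s
      have hY0 : 0 ≤ ∑ t, ∑ a, n t * πθ t a * Ptr t a s := by
        refine Finset.sum_nonneg fun t _ => Finset.sum_nonneg fun a _ => ?_
        exact mul_nonneg (mul_nonneg (hn0 t) (hπθ0 t a)) (hPtr0 t a s)
      refine max_le ?_ (mul_nonneg hβ0.le hY0)
      have hXY : -(∑ t, ∑ a, dθtr t * πθ t a * Ptr t a s)
          ≤ ∑ t, ∑ a, n t * πθ t a * Ptr t a s := by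
        have h1 : -(∑ t, ∑ a, dθtr t * πθ t a * Ptr t a s)
            = ∑ t, ∑ a, (-dθtr t) * πθ t a * Ptr t a s := by
          rw [← Finset.sum_neg_distrib]
          refine Finset.sum_congr rfl fun t _ => ?_
          rw [← Finset.sum_neg_distrib]
          exact Finset.sum_congr rfl fun a _ => by ring
        rw [h1]
        refine Finset.sum_le_sum fun t _ => Finset.sum_le_sum fun a _ => ?_
        exact mul_le_mul_of_nonneg_right
          (mul_le_mul_of_nonneg_right (hnd t) (hπθ0 t a)) (hPtr0 t a s)
      have hmulXY := mul_le_mul_of_nonneg_left hXY hβ0.le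
      have hm : 0 ≤ (1 - γ) * μ s := mul_nonneg h1γ.le (hμ0 s)
      have hds := hdθtr s
      nlinarith [hmulXY, hm, hds]
    have hsum_le : ∑ s, n s ≤ γ * ∑ s, n s := by
      calc ∑ s, n s ≤ ∑ s, γ * ∑ t, ∑ a, n t * πθ t a * Ptr t a s :=
            Finset.sum_le_sum fun s _ => step s
        _ = γ * ∑ s, ∑ t, ∑ a, n t * πθ t a * Ptr t a s := by rw [← Finset.mul_sum]
        _ = γ * ∑ s, n s := by rw [marg n]
    have hsum0 : 0 ≤ ∑ s, n s := Finset.sum_nonneg fun s _ => hn0 s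
    have hzero : ∑ s, n s = 0 := by nlinarith
    intro s
    have := (Finset.sum_eq_zero_iff_of_nonneg (fun s _ => hn0 s)).mp hzero s
      (Finset.mem_univ s)
    have h2 := hnd s
    rw [this] at h2
    linarith
  -- the pairing identity
  have e2 : ∑ s, (∑ t, ∑ a, dθtr t * πθ t a * Ptr t a s) * Dtr s
      = ∑ t, dθtr t * ∑ a, πθ t a * ∑ s', Ptr t a s' * Dtr s' := by
    calc ∑ s, (∑ t, ∑ a, dθtr t * πθ t a * Ptr t a s) * Dtr s
        = ∑ s, ∑ t, ∑ a, dθtr t * πθ t a * Ptr t a s * Dtr s := by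
          refine Finset.sum_congr rfl fun s _ => ?_
          rw [Finset.sum_mul]
          exact Finset.sum_congr rfl fun t _ => by rw [Finset.sum_mul]
      _ = ∑ t, ∑ s, ∑ a, dθtr t * πθ t a * Ptr t a s * Dtr s := Finset.sum_comm
      _ = ∑ t, dθtr t * ∑ a, πθ t a * ∑ s', Ptr t a s' * Dtr s' := by
          refine Finset.sum_congr rfl fun t _ => ?_
          rw [Finset.sum_comm, Finset.mul_sum]
          refine Finset.sum_congr rfl fun a _ => ?_
          rw [Finset.mul_sum, Finset.mul_sum]
          exact Finset.sum_congr rfl fun s' _ => by ring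
  have e1 : ∑ s, dθtr s * Dtr s = (1 - γ) * (∑ s, μ s * Dtr s)
      + γ * ∑ t, dθtr t * ∑ a, πθ t a * ∑ s', Ptr t a s' * Dtr s' := by
    calc ∑ s, dθtr s * Dtr s
        = ∑ s, ((1 - γ) * μ s + γ * ∑ t, ∑ a, dθtr t * πθ t a * Ptr t a s) * Dtr s :=
          Finset.sum_congr rfl fun s _ => by rw [hdθtr s]
      _ = ∑ s, ((1 - γ) * (μ s * Dtr s)
            + γ * ((∑ t, ∑ a, dθtr t * πθ t a * Ptr t a s) * Dtr s)) :=
          Finset.sum_congr rfl fun s _ => by ring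
      _ = (1 - γ) * (∑ s, μ s * Dtr s)
            + γ * ∑ s, (∑ t, ∑ a, dθtr t * πθ t a * Ptr t a s) * Dtr s := by
          rw [Finset.sum_add_distrib, ← Finset.mul_sum, ← Finset.mul_sum]
      _ = (1 - γ) * (∑ s, μ s * Dtr s)
            + γ * ∑ t, dθtr t * ∑ a, πθ t a * ∑ s', Ptr t a s' * Dtr s' := by rw [e2]
  -- combine with the Bellman equation for Dtr
  have pair : (1 - γ) * (∑ s, μ s * Dtr s)
      = ∑ s, dθtr s * (Abar s
        + γ * ∑ a, (πref s a - πθ s a) * ∑ s', Ptr s a s' * Dtr s') := by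
    have h5 : ∀ s, dθtr s * (Abar s
        + γ * ∑ a, (πref s a - πθ s a) * ∑ s', Ptr s a s' * Dtr s')
        = dθtr s * Dtr s
          - γ * (dθtr s * ∑ a, πθ s a * ∑ s', Ptr s a s' * Dtr s') := by
      intro s
      have h6 : ∑ a, (πref s a - πθ s a) * ∑ s', Ptr s a s' * Dtr s'
          = (∑ a, πref s a * ∑ s', Ptr s a s' * Dtr s')
            - ∑ a, πθ s a * ∑ s', Ptr s a s' * Dtr s' := by
        rw [← Finset.sum_sub_distrib]
        exact Finset.sum_congr rfl fun a _ => by ring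
      rw [h6]
      have h7 := hDtr_eq s
      linear_combination (-dθtr s) * h7
    calc (1 - γ) * (∑ s, μ s * Dtr s)
        = ∑ s, dθtr s * Dtr s
          - γ * ∑ t, dθtr t * ∑ a, πθ t a * ∑ s', Ptr t a s' * Dtr s' := by
          linear_combination -e1
      _ = ∑ s, (dθtr s * Dtr s
          - γ * (dθtr s * ∑ a, πθ s a * ∑ s', Ptr s a s' * Dtr s')) := by
          rw [Finset.sum_sub_distrib, ← Finset.mul_sum]
      _ = ∑ s, dθtr s * (Abar s
          + γ * ∑ a, (πref s a - πθ s a) * ∑ s', Ptr s a s' * Dtr s') :=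
          Finset.sum_congr rfl fun s _ => (h5 s).symm
  -- bound the policy-shift error term
  have hEbound : ∀ s, |∑ a, (πref s a - πθ s a) * ∑ s', Ptr s a s' * Dtr s'|
      ≤ 2 * δ * (εA / (1 - γ)) := by
    intro s
    have inner : ∀ a, |∑ s', Ptr s a s' * Dtr s'| ≤ Stmt14Aux.snorm Dtr := by
      intro a
      have := Stmt14Aux.abs_sum_mul_le (Ptr s a) Dtr (Stmt14Aux.snorm Dtr)
        (hPtr0 s a) (Stmt14Aux.le_snorm Dtr)
      rwa [hPtr1 s a, one_mul] at this
    have hb := Stmt14Aux.abs_sum_sub_mul_le (πref s) (πθ s)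
      (fun a => ∑ s', Ptr s a s' * Dtr s') (Stmt14Aux.snorm Dtr) inner
    refine hb.trans ?_
    have h8 : 2 * tvDist (πref s) (πθ s) * Stmt14Aux.snorm Dtr
        ≤ 2 * δ * Stmt14Aux.snorm Dtr :=
      mul_le_mul_of_nonneg_right (by linarith [hδ' s]) (Stmt14Aux.snorm_nonneg Dtr)
    refine h8.trans ?_
    exact mul_le_mul_of_nonneg_left hDtrn (by linarith)
  -- lower bound on the advantage term
  have lower : ∑ s, dθtr s * (Abar s
      + γ * ∑ a, (πref s a - πθ s a) * ∑ s', Ptr s a s' * Dtr s')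
      ≥ (∑ s, dθtr s * Abar s) - γ * (2 * δ * (εA / (1 - γ))) := by
    have hterm : ∀ s, dθtr s * (Abar s
        + γ * ∑ a, (πref s a - πθ s a) * ∑ s', Ptr s a s' * Dtr s')
        ≥ dθtr s * Abar s - dθtr s * (γ * (2 * δ * (εA / (1 - γ)))) := by
      intro s
      have hE := (abs_le.mp (hEbound s)).1
      have hprod := mul_nonneg (hd0 s) (mul_nonneg hβ0.le
        (by linarith : 0 ≤ (∑ a, (πref s a - πθ s a) * ∑ s', Ptr s a s' * Dtr s')
          + 2 * δ * (εA / (1 - γ))))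
      nlinarith [hprod]
    calc ∑ s, dθtr s * (Abar s
        + γ * ∑ a, (πref s a - πθ s a) * ∑ s', Ptr s a s' * Dtr s')
        ≥ ∑ s, (dθtr s * Abar s - dθtr s * (γ * (2 * δ * (εA / (1 - γ))))) :=
          Finset.sum_le_sum fun s _ => hterm s
      _ = (∑ s, dθtr s * Abar s) - (∑ s, dθtr s) * (γ * (2 * δ * (εA / (1 - γ)))) := by
          rw [Finset.sum_sub_distrib, Finset.sum_mul]
      _ = (∑ s, dθtr s * Abar s) - γ * (2 * δ * (εA / (1 - γ))) := by
          rw [hdsum, one_mul]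
  -- conservative improvement bound in the training MDP
  have hA : (∑ s, μ s * Vreftr s) - (∑ s, μ s * Vθtr s)
      ≥ (1 / (1 - γ)) * (∑ s, dθtr s * Abar s) - (2 * γ / (1 - γ) ^ 2) * εA * δ := by
    have hsplit : ∑ s, μ s * Dtr s
        = (∑ s, μ s * Vreftr s) - (∑ s, μ s * Vθtr s) := by
      rw [← Finset.sum_sub_distrib]
      exact Finset.sum_congr rfl fun s _ => by show μ s * (Vreftr s - Vθtr s) = _; ring
    have hmain : (1 - γ) * (∑ s, μ s * Dtr s)
        ≥ (∑ s, dθtr s * Abar s) - γ * (2 * δ * (εA / (1 - γ))) := by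
      rw [pair]; exact lower
    have hdiv : ∑ s, μ s * Dtr s
        ≥ ((∑ s, dθtr s * Abar s) - γ * (2 * δ * (εA / (1 - γ)))) / (1 - γ) := by
      rw [ge_iff_le, div_le_iff₀ h1γ]
      nlinarith [hmain]
    have heq : ((∑ s, dθtr s * Abar s) - γ * (2 * δ * (εA / (1 - γ)))) / (1 - γ)
        = (1 / (1 - γ)) * (∑ s, dθtr s * Abar s) - (2 * γ / (1 - γ) ^ 2) * εA * δ := by
      field_simp
    rw [← hsplit]
    rw [heq] at hdiv
    exact hdiv
  -- simulation bounds
  have hsimθ := Stmt14Aux.simulation_bound hβ0 hβ1 r Rmax hr Ptr Pdep hPtr0 hPtr1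
    hPdep0 hPdep1 εP hεP πθ hπθ0 hπθ1 Vθtr Vθdep hVθtr hVθdep
  have hsimref := Stmt14Aux.simulation_bound hβ0 hβ1 r Rmax hr Ptr Pdep hPtr0 hPtr1
    hPdep0 hPdep1 εP hεP πref hπref0 hπref1 Vreftr Vrefdep hVreftr hVrefdep
  have hJ : ∀ V W : S → ℝ, Stmt14Aux.snorm (fun s => V s - W s) ≤
      2 * γ * εP * Rmax / (1 - γ) ^ 2 →
      |(∑ s, μ s * V s) - (∑ s, μ s * W s)| ≤ 2 * γ * εP * Rmax / (1 - γ) ^ 2 := by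
    intro V W hVW
    have hsplit : (∑ s, μ s * V s) - (∑ s, μ s * W s) = ∑ s, μ s * (V s - W s) := by
      rw [← Finset.sum_sub_distrib]
      exact Finset.sum_congr rfl fun s _ => by ring
    rw [hsplit]
    have := Stmt14Aux.abs_sum_mul_le μ (fun s => V s - W s)
      (Stmt14Aux.snorm (fun s => V s - W s)) hμ0
      (Stmt14Aux.le_snorm (fun s => V s - W s))
    rw [hμ1, one_mul] at this
    exact this.trans hVW
  have hB := hJ Vrefdep Vreftr hsimref
  have hC := hJ Vθdep Vθtr hsimθ
  have hB1 := (abs_le.mp hB).1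
  have hC2 := (abs_le.mp hC).2
  have hq : (4 * γ * Rmax / (1 - γ) ^ 2) * εP
      = 2 * γ * εP * Rmax / (1 - γ) ^ 2 + 2 * γ * εP * Rmax / (1 - γ) ^ 2 := by
    ring
  linarith [hA, hB1, hC2]
end

section
/- Let Γ be a nonempty finite set, let α ∈ (0,1), and let u, v, v̂ be functions Γ → ℝ that are strictly positive on Γ, with max_{a∈Γ} |log v̂(a) − log v(a)| ≤ ε. Define F(p) = Σ_{a∈Γ} p(a)·(α·log u(a) + (1−α)·log v(a)) + H(p) and F̂(p) = Σ_{a∈Γ} p(a)·(α·log u(a) + (1−α)·log v̂(a)) + H(p) for probability mass functions p on Γ. If p* maximizes F over probability mass functions on Γ and p̂ maximizes F̂ over probability mass functions on Γ, then F(p*) − F(p̂) ≤ 2·(1−α)·ε; that is, the plug-in refined policy computed from the estimated prior v̂ is within 2(1−α)ε of the exact Product-of-Experts optimum in the true objective. -/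
/-- Shannon entropy of a probability mass function on a finite set. Since
`Real.log 0 = 0`, summing over all of `Γ` agrees with summing over
`{a | 0 < p a}`. -/
noncomputable def entropy {Γ : Type*} [Fintype Γ] (p : Γ → ℝ) : ℝ :=
  -∑ a, p a * Real.log (p a)

/-- The entropy-regularized objective
`F(p) = Σ_a p(a)·(α·log u(a) + (1−α)·log v(a)) + H(p)` on a finite common
support `Γ`. -/
noncomputable def poeObjOn {Γ : Type*} [Fintype Γ] (α : ℝ) (u v p : Γ → ℝ) : ℝ :=
  (∑ a, p a * (α * Real.log (u a) + (1 - α) * Real.log (v a))) + entropy p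

/-- **Plug-in prior stability.** If the estimated prior `v̂` satisfies
`max_a |log v̂(a) − log v(a)| ≤ ε`, and `p*` maximizes the true objective `F`
while `p̂` maximizes the plug-in objective `F̂`, then
`F(p*) − F(p̂) ≤ 2(1−α)ε`. -/
theorem stmt_15 {Γ : Type*} [Fintype Γ] [Nonempty Γ]
    (α : ℝ) (hα : α ∈ Set.Ioo (0 : ℝ) 1)
    (u v vhat : Γ → ℝ)
    (hu : ∀ a, 0 < u a) (hv : ∀ a, 0 < v a) (hvhat : ∀ a, 0 < vhat a)
    (ε : ℝ) (hε : ∀ a, |Real.log (vhat a) - Real.log (v a)| ≤ ε)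
    (pstar phat : Γ → ℝ)
    (hps0 : ∀ a, 0 ≤ pstar a) (hps1 : ∑ a, pstar a = 1)
    (hph0 : ∀ a, 0 ≤ phat a) (hph1 : ∑ a, phat a = 1)
    (hmax : ∀ p : Γ → ℝ, (∀ a, 0 ≤ p a) → (∑ a, p a = 1) →
      poeObjOn α u v p ≤ poeObjOn α u v pstar)
    (hmaxHat : ∀ p : Γ → ℝ, (∀ a, 0 ≤ p a) → (∑ a, p a = 1) →
      poeObjOn α u vhat p ≤ poeObjOn α u vhat phat) :
    poeObjOn α u v pstar - poeObjOn α u v phat ≤ 2 * (1 - α) * ε := by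
  obtain ⟨hα0, hα1⟩ := hα
  have h1α : (0:ℝ) ≤ 1 - α := by linarith
  have key : ∀ p : Γ → ℝ, (∀ a, 0 ≤ p a) → (∑ a, p a = 1) →
      |poeObjOn α u v p - poeObjOn α u vhat p| ≤ (1 - α) * ε := by
    intro p hp0 hp1
    have hdiff : poeObjOn α u v p - poeObjOn α u vhat p
        = ∑ a, p a * ((1 - α) * (Real.log (v a) - Real.log (vhat a))) := by
      simp only [poeObjOn]
      rw [show ∀ x y e : ℝ, x + e - (y + e) = x - y from fun _ _ _ => by ring,
        ← Finset.sum_sub_distrib]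
      exact Finset.sum_congr rfl fun a _ => by ring
    rw [hdiff]
    calc |∑ a, p a * ((1 - α) * (Real.log (v a) - Real.log (vhat a)))|
        ≤ ∑ a, |p a * ((1 - α) * (Real.log (v a) - Real.log (vhat a)))| :=
          Finset.abs_sum_le_sum_abs _ _
      _ ≤ ∑ a, p a * ((1 - α) * ε) := by
          apply Finset.sum_le_sum
          intro a _
          rw [abs_mul, abs_of_nonneg (hp0 a), abs_mul, abs_of_nonneg h1α,
            abs_sub_comm]
          exact mul_le_mul_of_nonneg_left
            (mul_le_mul_of_nonneg_left (hε a) h1α) (hp0 a)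
      _ = (1 - α) * ε := by rw [← Finset.sum_mul, hp1, one_mul]
  have k1 := key pstar hps0 hps1
  have k2 := key phat hph0 hph1
  have h3 := hmaxHat pstar hps0 hps1
  rw [abs_le] at k1 k2
  linarith [k1.1, k1.2, k2.1, k2.2]
end
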